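/- arXiv:1406.2601 — 9 statements merged into one kernel-verified Lean document; each statement's English description precedes it below -/
import Mathlib

section
/- Let A and B be n×n matrices over the tropical semiring such that the tropical product AB is sign-nonsingular. Then for every permutation σ ∈ Σ(A) and every permutation τ ∈ Σ(B), the composition τσ belongs to Σ(AB), and moreover perm(A) + perm(B) = perm(AB). -/
/-- Tropical (min-plus) matrix product. -/
noncomputable def tropMul {l m o : Type*} [Fintype m] [Nonempty m]
    (A : Matrix l m ℝ) (B : Matrix m o ℝ) : Matrix l o ℝ :=
  fun i j => Finset.univ.inf' Finset.univ_nonempty fun t => A i t + B t j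

/-- Evaluation of a word over `{x, y}` (here `true` stands for `x`, `false` for `y`)
as a tropical matrix product; the empty word evaluates to the junk value `A`. -/
noncomputable def evalWord {n : ℕ} [NeZero n] (A B : Matrix (Fin n) (Fin n) ℝ) :
    List Bool → Matrix (Fin n) (Fin n) ℝ
  | [] => A
  | b :: t => t.foldl (fun M c => tropMul M (cond c A B)) (cond b A B)

/-- Tropical matrix power (`tropPow A k` is `A^k` for `k ≥ 1`; `A^0` is junk `= A`). -/
noncomputable def tropPow {n : ℕ} [NeZero n] (A : Matrix (Fin n) (Fin n) ℝ) (k : ℕ) :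
    Matrix (Fin n) (Fin n) ℝ :=
  evalWord A A (List.replicate k true)

/-- Tropical permanent. -/
noncomputable def tropPerm {n : ℕ} (A : Matrix (Fin n) (Fin n) ℝ) : ℝ :=
  Finset.univ.inf' Finset.univ_nonempty fun σ : Equiv.Perm (Fin n) => ∑ i, A i (σ i)

/-- `Σ(A)`: the set of permutations attaining the tropical permanent. -/
def minPerms {n : ℕ} (A : Matrix (Fin n) (Fin n) ℝ) : Set (Equiv.Perm (Fin n)) :=
  { σ | ∑ i, A i (σ i) = tropPerm A }

/-- A matrix is sign-nonsingular if all permutations in `Σ(A)` have the same parity. -/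
def SignNonsingular {n : ℕ} (A : Matrix (Fin n) (Fin n) ℝ) : Prop :=
  ∀ σ ∈ minPerms A, ∀ τ ∈ minPerms A, Equiv.Perm.sign σ = Equiv.Perm.sign τ

/-- A matrix is sign-singular if `Σ(A)` contains two permutations of different parity. -/
def SignSingular {n : ℕ} (A : Matrix (Fin n) (Fin n) ℝ) : Prop :=
  ∃ σ ∈ minPerms A, ∃ τ ∈ minPerms A, Equiv.Perm.sign σ ≠ Equiv.Perm.sign τ

/-- Similarity transformation determined by `s`. -/
def simTrans {n : ℕ} (s : Fin n → ℝ) (C : Matrix (Fin n) (Fin n) ℝ) :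
    Matrix (Fin n) (Fin n) ℝ :=
  fun i j => C i j + s i - s j

/-- Diagonally `H`-dominant matrix. -/
def DiagDominant {n : ℕ} (H : ℝ) (A : Matrix (Fin n) (Fin n) ℝ) : Prop :=
  ∀ i j, A i j ≥ max (A i i) (A j j) + H * |A i i - A j j|

/-- Diagonally `H`-dominant pair of matrices. -/
def DiagDomPair {n : ℕ} (H : ℝ) (A B : Matrix (Fin n) (Fin n) ℝ) : Prop :=
  (∀ i, A i i = B i i) ∧ DiagDominant H (fun i j => min (A i j) (B i j))

/-- If the tropical product `AB` is sign-nonsingular, then for every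
`σ ∈ Σ(A)` and `τ ∈ Σ(B)`, `τσ ∈ Σ(AB)`, and `perm(A) + perm(B) = perm(AB)`. -/
theorem stmt0 {n : ℕ} [NeZero n] (A B : Matrix (Fin n) (Fin n) ℝ)
    (hAB : SignNonsingular (tropMul A B))
    (σ τ : Equiv.Perm (Fin n)) (hσ : σ ∈ minPerms A) (hτ : τ ∈ minPerms B) :
    τ * σ ∈ minPerms (tropMul A B) ∧
      tropPerm A + tropPerm B = tropPerm (tropMul A B) := by
  classical
  set C := tropMul A B with hCdef
  have hCle : ∀ π : Equiv.Perm (Fin n), tropPerm C ≤ ∑ i, C i (π i) := fun π =>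
    Finset.inf'_le _ (Finset.mem_univ π)
  have hAle : ∀ ρ : Equiv.Perm (Fin n), tropPerm A ≤ ∑ i, A i (ρ i) := fun ρ =>
    Finset.inf'_le _ (Finset.mem_univ ρ)
  have hBle : ∀ ρ : Equiv.Perm (Fin n), tropPerm B ≤ ∑ i, B i (ρ i) := fun ρ =>
    Finset.inf'_le _ (Finset.mem_univ ρ)
  have hentry : ∀ i j t, C i j ≤ A i t + B t j := fun i j t =>
    Finset.inf'_le _ (Finset.mem_univ t)
  have hσ' : ∑ i, A i (σ i) = tropPerm A := hσ
  have hτ' : ∑ i, B i (τ i) = tropPerm B := hτ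
  -- Upper bound: ∑ C i ((τ*σ) i) ≤ tropPerm A + tropPerm B
  have hup : ∑ i, C i ((τ * σ) i) ≤ tropPerm A + tropPerm B := by
    have h1 : ∑ i, C i ((τ * σ) i) ≤ ∑ i, (A i (σ i) + B (σ i) (τ (σ i))) :=
      Finset.sum_le_sum fun i _ => hentry i _ (σ i)
    have h2 : ∑ i, (A i (σ i) + B (σ i) (τ (σ i)))
        = ∑ i, A i (σ i) + ∑ i, B (σ i) (τ (σ i)) := Finset.sum_add_distrib
    have h3 : ∑ i, B (σ i) (τ (σ i)) = ∑ j, B j (τ j) :=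
      Equiv.sum_comp σ (fun j => B j (τ j))
    rw [h2, h3, hσ', hτ'] at h1
    exact h1
  -- Lower bound: tropPerm A + tropPerm B ≤ tropPerm C
  obtain ⟨π, -, hπ⟩ := Finset.exists_mem_eq_inf' (Finset.univ_nonempty)
    (fun π : Equiv.Perm (Fin n) => ∑ i, C i (π i))
  have hπ2 : tropPerm C = ∑ i, C i (π i) := hπ
  have hπmem : π ∈ minPerms C := hπ2.symm
  have hchoice : ∀ i, ∃ t, C i (π i) = A i t + B t (π i) := by
    intro i
    obtain ⟨t, -, ht⟩ := Finset.exists_mem_eq_inf' (Finset.univ_nonempty)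
      (fun t => A i t + B t (π i))
    exact ⟨t, ht⟩
  choose t ht using hchoice
  -- t is injective
  have htinj : Function.Injective t := by
    by_contra hni
    obtain ⟨i, j, htij, hij⟩ := Function.not_injective_iff.mp hni
    set π' : Equiv.Perm (Fin n) := π * Equiv.swap i j with hπ'def
    have hji : j ≠ i := fun h => hij h.symm
    have hmemj : j ∈ Finset.univ.erase i := Finset.mem_erase.mpr ⟨hji, Finset.mem_univ j⟩
    have hsplit : ∀ g : Fin n → ℝ,
        ∑ k, g k = g i + (g j + ∑ k ∈ (Finset.univ.erase i).erase j, g k) := by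
      intro g
      rw [← Finset.add_sum_erase _ g (Finset.mem_univ i), ← Finset.add_sum_erase _ g hmemj]
    have hπ'i : π' i = π j := by simp [hπ'def, Equiv.swap_apply_left]
    have hπ'j : π' j = π i := by simp [hπ'def, Equiv.swap_apply_right]
    have hπ'k : ∀ k ∈ (Finset.univ.erase i).erase j, π' k = π k := by
      intro k hk
      have hkj : k ≠ j := (Finset.mem_erase.mp hk).1
      have hki : k ≠ i := (Finset.mem_erase.mp (Finset.mem_erase.mp hk).2).1
      simp [hπ'def, Equiv.swap_apply_of_ne_of_ne hki hkj]
    have hsum' : ∑ k, C k (π' k) ≤ ∑ k, C k (π k) := by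
      rw [hsplit (fun k => C k (π' k)), hsplit (fun k => C k (π k))]
      have htail : ∑ k ∈ (Finset.univ.erase i).erase j, C k (π' k)
          = ∑ k ∈ (Finset.univ.erase i).erase j, C k (π k) :=
        Finset.sum_congr rfl fun k hk => by rw [hπ'k k hk]
      rw [htail, hπ'i, hπ'j]
      have h1 : C i (π j) ≤ A i (t i) + B (t i) (π j) := hentry i (π j) (t i)
      have h2 : C j (π i) ≤ A j (t i) + B (t i) (π i) := by
        have := hentry j (π i) (t j); rwa [← htij] at this
      have hti := ht i
      have htj := ht j
      rw [← htij] at htj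
      linarith
    have hπ'mem : π' ∈ minPerms C :=
      le_antisymm (hsum'.trans (le_of_eq hπ2.symm)) (hCle π')
    have hsigneq := hAB π hπmem π' hπ'mem
    rw [hπ'def, Equiv.Perm.sign_mul, Equiv.Perm.sign_swap hij] at hsigneq
    have h1m1 : (1 : ℤˣ) = -1 :=
      mul_left_cancel ((mul_one (Equiv.Perm.sign π)).trans hsigneq)
    exact absurd h1m1 (by decide)
  have htbij : Function.Bijective t := (Finite.injective_iff_bijective).mp htinj
  let ρ : Equiv.Perm (Fin n) := Equiv.ofBijective t htbij
  have hρ : ∀ i, ρ i = t i := fun i => rfl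
  have hlow : tropPerm A + tropPerm B ≤ tropPerm C := by
    have hsum : tropPerm C = ∑ i, A i (ρ i) + ∑ i, B (ρ i) (π i) := by
      rw [hπ2, ← Finset.sum_add_distrib]
      exact Finset.sum_congr rfl fun i _ => by rw [hρ]; exact ht i
    have hB2 : ∑ i, B (ρ i) (π i) = ∑ j, B j ((ρ.symm.trans π) j) := by
      rw [← Equiv.sum_comp ρ (fun j => B j ((ρ.symm.trans π) j))]
      exact Finset.sum_congr rfl fun i _ => by simp
    rw [hsum, hB2]
    exact add_le_add (hAle ρ) (hBle (ρ.symm.trans π))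
  have heq : tropPerm A + tropPerm B = tropPerm C :=
    le_antisymm (hlow.trans (le_of_eq rfl)) ((hCle (τ * σ)).trans hup)
  refine ⟨le_antisymm (hup.trans (le_of_eq heq)) (hCle (τ * σ)), heq⟩
end

section
/- If the tropical product AB of two n×n matrices over the tropical semiring is sign-nonsingular, then both A and B are sign-nonsingular. -/
/-- If `AB` is sign-nonsingular, then so are `A` and `B`. -/
theorem stmt2 {n : ℕ} [NeZero n] (A B : Matrix (Fin n) (Fin n) ℝ)
    (hAB : SignNonsingular (tropMul A B)) :
    SignNonsingular A ∧ SignNonsingular B := by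
  set C := tropMul A B with hCdef
  have hCle : ∀ (i j t : Fin n), C i j ≤ A i t + B t j := fun i j t =>
    Finset.inf'_le _ (Finset.mem_univ t)
  have hPermle : ∀ (M : Matrix (Fin n) (Fin n) ℝ) (σ : Equiv.Perm (Fin n)),
      tropPerm M ≤ ∑ i, M i (σ i) := fun M σ =>
    Finset.inf'_le _ (Finset.mem_univ σ)
  have hmem : ∀ (M : Matrix (Fin n) (Fin n) ℝ) (σ : Equiv.Perm (Fin n)),
      (∑ i, M i (σ i)) ≤ tropPerm M → σ ∈ minPerms M := by
    intro M σ h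
    exact le_antisymm h (hPermle M σ)
  -- a minimizer π of C
  obtain ⟨π, -, hπ⟩ := Finset.exists_mem_eq_inf' (Finset.univ_nonempty)
    (fun σ : Equiv.Perm (Fin n) => ∑ i, C i (σ i))
  have hπ' : tropPerm C = ∑ i, C i (π i) := hπ
  have hπmem : π ∈ minPerms C := hπ'.symm
  -- optimal column choice f
  choose f _ hf using fun i => Finset.exists_mem_eq_inf' (Finset.univ_nonempty)
    (fun t => A i t + B t (π i))
  have hf' : ∀ i, C i (π i) = A i (f i) + B (f i) (π i) := hf
  -- f is injective
  have hinj : Function.Injective f := by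
    intro i1 i2 hf12
    by_contra hne
    set π' : Equiv.Perm (Fin n) := (Equiv.swap i1 i2).trans π with hπ'def
    have hfswap : ∀ i, f (Equiv.swap i1 i2 i) = f i := by
      intro i
      rcases eq_or_ne i i1 with rfl | h1
      · simp [Equiv.swap_apply_left, hf12]
      rcases eq_or_ne i i2 with rfl | h2
      · simp [Equiv.swap_apply_right, hf12]
      · simp [Equiv.swap_apply_of_ne_of_ne h1 h2]
    have hsum : ∑ i, C i (π' i) ≤ ∑ i, C i (π i) := by
      calc ∑ i, C i (π' i) ≤ ∑ i, (A i (f i) + B (f i) (π' i)) :=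
            Finset.sum_le_sum (fun i _ => hCle i (π' i) (f i))
        _ = ∑ i, A i (f i) + ∑ i, B (f (Equiv.swap i1 i2 i)) (π (Equiv.swap i1 i2 i)) := by
            rw [Finset.sum_add_distrib]
            congr 1
            refine Finset.sum_congr rfl fun i _ => ?_
            rw [hfswap]
            rfl
        _ = ∑ i, A i (f i) + ∑ i, B (f i) (π i) := by
            congr 1
            exact Equiv.sum_comp (Equiv.swap i1 i2) (fun i => B (f i) (π i))
        _ = ∑ i, (A i (f i) + B (f i) (π i)) := (Finset.sum_add_distrib).symm
        _ = ∑ i, C i (π i) := Finset.sum_congr rfl fun i _ => (hf' i).symm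
    have hπ'mem : π' ∈ minPerms C := hmem C π' (hsum.trans_eq hπ'.symm)
    have hsign := hAB π hπmem π' hπ'mem
    have : Equiv.Perm.sign π = Equiv.Perm.sign (π * Equiv.swap i1 i2) := hsign
    rw [map_mul, Equiv.Perm.sign_swap hne] at this
    simp at this
  -- turn f into a permutation g
  let g : Equiv.Perm (Fin n) := Equiv.ofBijective f (Finite.injective_iff_bijective.mp hinj)
  have hg : ∀ i, g i = f i := fun i => rfl
  -- perm C splits
  have hsplit : tropPerm C = ∑ i, A i (g i) + ∑ i, B (g i) (π i) := by
    rw [hπ', ← Finset.sum_add_distrib]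
    exact Finset.sum_congr rfl fun i _ => hf' i
  have hA_le : tropPerm A ≤ ∑ i, A i (g i) := hPermle A g
  have hB_le : tropPerm B ≤ ∑ i, B (g i) (π i) := by
    have : ∑ i, B (g i) (π i) = ∑ i, B i ((g.symm.trans π) i) := by
      rw [← Equiv.sum_comp g (fun i => B i ((g.symm.trans π) i))]
      refine Finset.sum_congr rfl fun i _ => ?_
      simp [Equiv.trans_apply]
    rw [this]
    exact hPermle B (g.symm.trans π)
  -- perm C ≤ perm A + perm B
  obtain ⟨σ0, -, hσ0⟩ := Finset.exists_mem_eq_inf' (Finset.univ_nonempty)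
    (fun σ : Equiv.Perm (Fin n) => ∑ i, A i (σ i))
  obtain ⟨ρ0, -, hρ0⟩ := Finset.exists_mem_eq_inf' (Finset.univ_nonempty)
    (fun σ : Equiv.Perm (Fin n) => ∑ i, B i (σ i))
  have hσ0' : tropPerm A = ∑ i, A i (σ0 i) := hσ0
  have hρ0' : tropPerm B = ∑ i, B i (ρ0 i) := hρ0
  have hσ0mem : σ0 ∈ minPerms A := hσ0'.symm
  have hρ0mem : ρ0 ∈ minPerms B := hρ0'.symm
  have hC_le : tropPerm C ≤ tropPerm A + tropPerm B := by
    calc tropPerm C ≤ ∑ i, C i ((σ0.trans ρ0) i) := hPermle C (σ0.trans ρ0)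
      _ ≤ ∑ i, (A i (σ0 i) + B (σ0 i) (ρ0 (σ0 i))) :=
          Finset.sum_le_sum (fun i _ => hCle i _ (σ0 i))
      _ = ∑ i, A i (σ0 i) + ∑ i, B (σ0 i) (ρ0 (σ0 i)) := Finset.sum_add_distrib
      _ = ∑ i, A i (σ0 i) + ∑ j, B j (ρ0 j) := by
          congr 1
          exact Equiv.sum_comp σ0 (fun j => B j (ρ0 j))
      _ = tropPerm A + tropPerm B := by rw [hσ0', hρ0']
  have heq : tropPerm C = tropPerm A + tropPerm B := by
    have h1 : tropPerm A + tropPerm B ≤ tropPerm C := by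
      rw [hsplit]
      exact add_le_add hA_le hB_le
    linarith
  -- composition of minimizers is a minimizer of C
  have comp : ∀ σ ∈ minPerms A, ∀ ρ ∈ minPerms B, σ.trans ρ ∈ minPerms C := by
    intro σ hσ ρ hρ
    apply hmem
    have hσe : ∑ i, A i (σ i) = tropPerm A := hσ
    have hρe : ∑ i, B i (ρ i) = tropPerm B := hρ
    calc ∑ i, C i ((σ.trans ρ) i) ≤ ∑ i, (A i (σ i) + B (σ i) (ρ (σ i))) :=
          Finset.sum_le_sum (fun i _ => hCle i _ (σ i))
      _ = ∑ i, A i (σ i) + ∑ i, B (σ i) (ρ (σ i)) := Finset.sum_add_distrib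
      _ = ∑ i, A i (σ i) + ∑ j, B j (ρ j) := by
          congr 1
          exact Equiv.sum_comp σ (fun j => B j (ρ j))
      _ = tropPerm A + tropPerm B := by rw [hσe, hρe]
      _ = tropPerm C := heq.symm
  constructor
  · intro σ hσ τ hτ
    have h1 := hAB _ (comp σ hσ ρ0 hρ0mem) _ (comp τ hτ ρ0 hρ0mem)
    have h2 : Equiv.Perm.sign (ρ0 * σ) = Equiv.Perm.sign (ρ0 * τ) := h1
    rw [map_mul, map_mul] at h2
    exact mul_left_cancel h2
  · intro ρ hρ τ hτ
    have h1 := hAB _ (comp σ0 hσ0mem ρ hρ) _ (comp σ0 hσ0mem τ hτ)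
    have h2 : Equiv.Perm.sign (ρ * σ0) = Equiv.Perm.sign (τ * σ0) := h1
    rw [map_mul, map_mul] at h2
    exact mul_right_cancel h2
end

section
/- For every n×n matrix A over the tropical semiring, either the tropical power A^{n!} is sign-singular, or the identity permutation belongs to Σ(A^{n!}). -/
section Aux

open Finset

variable {n : ℕ} [NeZero n]

/-- `powAux A k` is the tropical power `A^{k+1}`. -/
noncomputable def powAux (A : Matrix (Fin n) (Fin n) ℝ) (k : ℕ) :
    Matrix (Fin n) (Fin n) ℝ := (fun M => tropMul M A)^[k] A

lemma powAux_succ (A : Matrix (Fin n) (Fin n) ℝ) (k : ℕ) :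
    powAux A (k + 1) = tropMul (powAux A k) A :=
  Function.iterate_succ_apply' _ _ _

lemma tropPow_eq_powAux (A : Matrix (Fin n) (Fin n) ℝ) (k : ℕ) :
    tropPow A (k + 1) = powAux A k := by
  have key : ∀ (k : ℕ) (M : Matrix (Fin n) (Fin n) ℝ),
      List.foldl (fun M c => tropMul M (cond c A A)) M (List.replicate k true)
        = (fun M => tropMul M A)^[k] M := by
    intro k
    induction k with
    | zero => intro M; rfl
    | succ k ih =>
        intro M
        rw [List.replicate_succ, List.foldl_cons, ih]
        rfl
  show evalWord A A (List.replicate (k + 1) true) = _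
  rw [List.replicate_succ]
  exact key k A

lemma tropMul_le (M N : Matrix (Fin n) (Fin n) ℝ) (i j t : Fin n) :
    tropMul M N i j ≤ M i t + N t j := Finset.inf'_le _ (mem_univ t)

lemma tropMul_exists (M N : Matrix (Fin n) (Fin n) ℝ) (i j : Fin n) :
    ∃ t, tropMul M N i j = M i t + N t j := by
  obtain ⟨t, -, h⟩ := Finset.exists_mem_eq_inf' Finset.univ_nonempty
    (fun t => M i t + N t j)
  exact ⟨t, h⟩

/-- Weight of the first `k` steps of a walk. -/
noncomputable def wWeight (A : Matrix (Fin n) (Fin n) ℝ) (w : ℕ → Fin n) (k : ℕ) : ℝ :=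
  ∑ t ∈ Finset.range k, A (w t) (w (t + 1))

lemma powAux_le_walk (A : Matrix (Fin n) (Fin n) ℝ) (k : ℕ) (w : ℕ → Fin n) :
    powAux A k (w 0) (w (k + 1)) ≤ wWeight A w (k + 1) := by
  induction k with
  | zero =>
      simp [powAux, wWeight]
  | succ k ih =>
      rw [powAux_succ]
      calc tropMul (powAux A k) A (w 0) (w (k + 2))
          ≤ powAux A k (w 0) (w (k + 1)) + A (w (k + 1)) (w (k + 2)) :=
            tropMul_le _ _ _ _ _
        _ ≤ wWeight A w (k + 1) + A (w (k + 1)) (w (k + 2)) := by linarith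
        _ = wWeight A w (k + 2) :=
            (show
              wWeight A w (k + 2) = wWeight A w (k + 1) + A (w (k + 1)) (w (k + 2))
            from by rw [wWeight, Finset.sum_range_succ]; rfl).symm

lemma exists_walk (A : Matrix (Fin n) (Fin n) ℝ) (k : ℕ) (i j : Fin n) :
    ∃ w : ℕ → Fin n, w 0 = i ∧ w (k + 1) = j ∧ powAux A k i j = wWeight A w (k + 1) := by
  induction k generalizing j with
  | zero =>
      refine ⟨fun t => if t = 0 then i else j, by simp, by simp, ?_⟩
      simp [powAux, wWeight]
  | succ k ih =>
      rw [powAux_succ]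
      obtain ⟨t0, ht0⟩ := tropMul_exists (powAux A k) A i j
      obtain ⟨w, hw0, hwk, hww⟩ := ih t0
      refine ⟨fun t => if t ≤ k + 1 then w t else j, by simpa using hw0, by simp, ?_⟩
      rw [ht0, wWeight, Finset.sum_range_succ]
      have h1 : ∑ t ∈ Finset.range (k + 1),
          A (if t ≤ k + 1 then w t else j) (if t + 1 ≤ k + 1 then w (t + 1) else j)
          = wWeight A w (k + 1) := by
        refine Finset.sum_congr rfl fun t ht => ?_
        rw [Finset.mem_range] at ht
        rw [if_pos (by omega), if_pos (by omega)]
      rw [h1, if_pos (le_refl (k + 1)), if_neg (by omega), hwk, hww]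

end Aux

/-- Either `A^{n!}` is sign-singular, or `id ∈ Σ(A^{n!})`. -/
theorem stmt3 {n : ℕ} [NeZero n] (A : Matrix (Fin n) (Fin n) ℝ) :
    SignSingular (tropPow A (Nat.factorial n)) ∨
      (1 : Equiv.Perm (Fin n)) ∈ minPerms (tropPow A (Nat.factorial n)) := by
  obtain ⟨m, hm⟩ : ∃ m, Nat.factorial n = m + 1 :=
    ⟨Nat.factorial n - 1, (Nat.succ_pred_eq_of_pos (Nat.factorial_pos n)).symm⟩
  rw [hm, tropPow_eq_powAux]
  set B := powAux A m with hB
  obtain ⟨σ0, -, hσ0⟩ := Finset.exists_mem_eq_inf' Finset.univ_nonempty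
    (fun σ : Equiv.Perm (Fin n) => ∑ i, B i (σ i))
  have hσ0' : tropPerm B = ∑ i, B i (σ0 i) := hσ0
  choose W0 hW0 hWk hWw using fun i => exists_walk A m i (σ0 i)
  set W : Fin n → ℕ → Fin n := fun i t => W0 i (min t (m + 1)) with hWdef
  have hW0' : ∀ i, W i 0 = i := fun i => by
    simp only [hWdef, Nat.zero_min]; exact hW0 i
  have hWk' : ∀ i t, m + 1 ≤ t → W i t = σ0 i := fun i t ht => by
    simp only [hWdef, min_eq_right ht]; exact hWk i
  have hWw' : ∀ i, B i (σ0 i) = wWeight A (W i) (m + 1) := fun i => by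
    rw [hB, hWw i, wWeight, wWeight]
    refine Finset.sum_congr rfl fun t ht => ?_
    rw [Finset.mem_range] at ht
    simp only [hWdef, min_eq_left ht.le, min_eq_left (Nat.succ_le_of_lt ht)]
  by_cases hcol : ∃ t, t ≤ m + 1 ∧ ∃ i j : Fin n, i ≠ j ∧ W i t = W j t
  · left
    obtain ⟨t, htle, i, j, hij, hc⟩ := hcol
    have ht0 : 0 < t := by
      rcases Nat.eq_zero_or_pos t with h | h
      · subst h; rw [hW0' i, hW0' j] at hc; exact absurd hc hij
      · exact h
    set τ : Equiv.Perm (Fin n) := σ0 * Equiv.swap i j with hτ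
    have hτi : τ i = σ0 j := by
      simp only [hτ, Equiv.Perm.mul_apply, Equiv.swap_apply_left]
    have hτj : τ j = σ0 i := by
      simp only [hτ, Equiv.Perm.mul_apply, Equiv.swap_apply_right]
    have hτl : ∀ l, l ≠ i → l ≠ j → τ l = σ0 l := fun l h1 h2 => by
      simp only [hτ, Equiv.Perm.mul_apply, Equiv.swap_apply_of_ne_of_ne h1 h2]
    set Wi : ℕ → Fin n := fun s => if s < t then W i s else W j s with hWi
    set Wj : ℕ → Fin n := fun s => if s < t then W j s else W i s with hWj
    have hWi0 : Wi 0 = i := by simp only [hWi, if_pos ht0]; exact hW0' i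
    have hWj0 : Wj 0 = j := by simp only [hWj, if_pos ht0]; exact hW0' j
    have hnlt : ¬ (m + 1 < t) := by omega
    have hWik : Wi (m + 1) = σ0 j := by
      simp only [hWi, if_neg hnlt]; exact hWk' j (m + 1) le_rfl
    have hWjk : Wj (m + 1) = σ0 i := by
      simp only [hWj, if_neg hnlt]; exact hWk' i (m + 1) le_rfl
    have hsum : wWeight A Wi (m + 1) + wWeight A Wj (m + 1)
        = wWeight A (W i) (m + 1) + wWeight A (W j) (m + 1) := by
      rw [wWeight, wWeight, wWeight, wWeight, ← Finset.sum_add_distrib,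
        ← Finset.sum_add_distrib]
      refine Finset.sum_congr rfl fun s _ => ?_
      by_cases h1 : s < t
      · by_cases h2 : s + 1 < t
        · simp only [hWi, hWj, if_pos h1, if_pos h2]
        · have h3 : s + 1 = t := by omega
          simp only [hWi, hWj, if_pos h1, if_neg h2]
          rw [h3, hc]
      · have h2 : ¬ (s + 1 < t) := by omega
        simp only [hWi, hWj, if_neg h1, if_neg h2]
        ring
    have hbi : B i (σ0 j) ≤ wWeight A Wi (m + 1) := by
      have h := powAux_le_walk A m Wi
      rwa [hWi0, hWik] at h
    have hbj : B j (σ0 i) ≤ wWeight A Wj (m + 1) := by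
      have h := powAux_le_walk A m Wj
      rwa [hWj0, hWjk] at h
    have hkey : B i (σ0 j) + B j (σ0 i) ≤ B i (σ0 i) + B j (σ0 j) := by
      rw [hWw' i, hWw' j]
      linarith [hsum]
    have hτsum : ∑ l, B l (τ l) ≤ ∑ l, B l (σ0 l) := by
      have split : ∀ g : Fin n → ℝ, ∑ l, g l
          = g i + (g j + ∑ l ∈ (Finset.univ.erase i).erase j, g l) := by
        intro g
        rw [← Finset.add_sum_erase _ g (Finset.mem_univ i),
          ← Finset.add_sum_erase _ g (Finset.mem_erase.mpr ⟨hij.symm, Finset.mem_univ j⟩)]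
      rw [split (fun l => B l (τ l)), split (fun l => B l (σ0 l))]
      have hrest : ∑ l ∈ (Finset.univ.erase i).erase j, B l (τ l)
          = ∑ l ∈ (Finset.univ.erase i).erase j, B l (σ0 l) := by
        refine Finset.sum_congr rfl fun l hl => ?_
        rw [Finset.mem_erase, Finset.mem_erase] at hl
        rw [hτl l hl.2.1 hl.1]
      rw [hτi, hτj, hrest]
      linarith [hkey]
    have hτmem : τ ∈ minPerms B := by
      show ∑ l, B l (τ l) = tropPerm B
      refine le_antisymm ?_ (Finset.inf'_le _ (Finset.mem_univ τ))
      rw [hσ0']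
      exact hτsum
    refine ⟨σ0, hσ0'.symm, τ, hτmem, ?_⟩
    rw [hτ, Equiv.Perm.sign_mul, Equiv.Perm.sign_swap hij]
    intro h
    have h2 : Equiv.Perm.sign σ0 * 1 = Equiv.Perm.sign σ0 * (-1) := by
      rw [mul_one]; exact h
    exact absurd (mul_left_cancel h2) (by decide)
  · right
    push_neg at hcol
    have inj : ∀ t, Function.Injective fun i => W i t := by
      intro t i j h
      change W i t = W j t at h
      by_cases ht : t ≤ m + 1
      · by_contra hne
        exact hcol t ht i j hne h
      · rw [hWk' i t (by omega), hWk' j t (by omega)] at h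
        exact σ0.injective h
    have bij : ∀ t, Function.Bijective fun i => W i t :=
      fun t => Finite.injective_iff_bijective.mp (inj t)
    set e : ℕ → Equiv.Perm (Fin n) := fun t => Equiv.ofBijective _ (bij t) with he
    set ρ : ℕ → Equiv.Perm (Fin n) := fun t => (e t).symm.trans (e (t + 1)) with hρ
    have heap : ∀ t i, e t i = W i t := fun t i => rfl
    have hρap : ∀ t i, ρ t (W i t) = W i (t + 1) := by
      intro t i
      show (e (t + 1)) ((e t).symm (W i t)) = _
      have h1 : (e t).symm (W i t) = i := by
        rw [← heap t i, Equiv.symm_apply_apply]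
      rw [h1, heap]
    set c : Equiv.Perm (Fin n) → ℝ := fun ρ' => ∑ v, A v (ρ' v) with hcdef
    have step : ∀ t, ∑ i, A (W i t) (W i (t + 1)) = c (ρ t) := by
      intro t
      have h1 : ∀ i, A (W i t) (W i (t + 1)) = A (e t i) (ρ t (e t i)) := fun i => by
        rw [heap, hρap]
      rw [Finset.sum_congr rfl fun i _ => h1 i]
      exact Equiv.sum_comp (e t) (fun v => A v (ρ t v))
    obtain ⟨ρs, -, hρs⟩ := Finset.exists_min_image Finset.univ c Finset.univ_nonempty
    have htot : ∑ t ∈ Finset.range (m + 1), c (ρ t) = tropPerm B := by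
      rw [hσ0', Finset.sum_congr rfl fun t (_ : t ∈ Finset.range (m+1)) => (step t).symm,
        Finset.sum_comm]
      exact Finset.sum_congr rfl fun i _ => (hWw' i).symm
    have hord : ρs ^ (m + 1) = 1 := by
      rw [← hm, show Nat.factorial n = Fintype.card (Equiv.Perm (Fin n)) by
        rw [Fintype.card_perm, Fintype.card_fin]]
      exact pow_card_eq_one
    have hdiag : ∀ v : Fin n, B v v ≤ wWeight A (fun s => (ρs ^ s) v) (m + 1) := by
      intro v
      have h := powAux_le_walk A m (fun s => (ρs ^ s) v)
      simp only [pow_zero, hord, Equiv.Perm.one_apply] at h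
      exact h
    have hdsum : ∑ v, B v v ≤ ∑ t ∈ Finset.range (m + 1), c ρs := by
      calc ∑ v, B v v ≤ ∑ v, wWeight A (fun s => (ρs ^ s) v) (m + 1) :=
            Finset.sum_le_sum fun v _ => hdiag v
        _ = ∑ t ∈ Finset.range (m + 1), ∑ v, A ((ρs ^ t) v) ((ρs ^ (t + 1)) v) := by
            rw [Finset.sum_comm]
            rfl
        _ = ∑ t ∈ Finset.range (m + 1), c ρs := by
            refine Finset.sum_congr rfl fun t _ => ?_
            have h1 : ∀ v : Fin n, A ((ρs ^ t) v) ((ρs ^ (t + 1)) v)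
                = A ((ρs ^ t) v) (ρs ((ρs ^ t) v)) := fun v => by
              rw [pow_succ' ρs t]
              rfl
            rw [Finset.sum_congr rfl fun v _ => h1 v]
            exact Equiv.sum_comp (ρs ^ t) (fun v => A v (ρs v))
    have hle : ∑ v, B v v ≤ tropPerm B := by
      have h2 : ∑ t ∈ Finset.range (m + 1), c ρs ≤ ∑ t ∈ Finset.range (m + 1), c (ρ t) :=
        Finset.sum_le_sum fun t _ => hρs (ρ t) (Finset.mem_univ (ρ t))
      linarith [htot, hdsum]
    show ∑ i, B i ((1 : Equiv.Perm (Fin n)) i) = tropPerm B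
    have h1 : ∑ i, B i ((1 : Equiv.Perm (Fin n)) i) = ∑ v, B v v := rfl
    rw [h1]
    exact le_antisymm hle (Finset.inf'_le _ (Finset.mem_univ 1))
end

section
/- Let A be a sign-singular 3×3 matrix over the tropical semiring. Then there exist a 3×2 real matrix P and a 2×3 real matrix Q such that the tropical product PQ equals A. -/
/-!
Two permutations of opposite parity attain the tropical permanent; permuting rows and columns
turns them into the identity and the transposition `(0 1)`. Then the upper-left
`2 × 2` block is tropically singular, and after tropical diagonal scaling (adding constants to
rows and columns) the matrix takes the normal form `!![0, 0, a; 0, 0, 0; c, d, e]`, where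
`e ≤ c` and `e ≤ d` by minimality of the permanent and, after possibly exchanging the first two
rows and columns, `0 ≤ a`.
This normal form is written down explicitly as a tropical product through `ℝ²`.
-/

open Equiv

def TropFactorsThrough (k : Type*) [Fintype k] [Nonempty k] {l n : Type*}
    (A : Matrix l n ℝ) : Prop :=
  ∃ (P : Matrix l k ℝ) (Q : Matrix k n ℝ), tropMul P Q = A

namespace TropFactorsThrough

variable {k l n : Type*} [Fintype k] [Nonempty k] {A : Matrix l n ℝ}

theorem submatrix {l' n' : Type*} (h : TropFactorsThrough k A) (e : l' → l) (f : n' → n) :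
    TropFactorsThrough k (A.submatrix e f) := by
  obtain ⟨P, Q, rfl⟩ := h
  exact ⟨P.submatrix e id, Q.submatrix id f, rfl⟩

theorem add_row_col (h : TropFactorsThrough k A) (r : l → ℝ) (c : n → ℝ) :
    TropFactorsThrough k (fun i j => A i j + r i + c j) := by
  obtain ⟨P, Q, rfl⟩ := h
  refine ⟨fun i t => P i t + r i, fun t j => Q t j + c j, funext₂ fun i j => ?_⟩
  have hshift := Finset.apply_inf'_eq_inf'_comp Finset.univ_nonempty (f := fun t => P i t + Q t j)
    (· + (r i + c j)) fun x y => (min_add_add_right x y _).symm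
  simp only [tropMul, hshift, Function.comp_def, add_assoc, add_left_comm (r i)]

end TropFactorsThrough

theorem tropMul_fin_two_apply {l n : Type*} (P : Matrix l (Fin 2) ℝ) (Q : Matrix (Fin 2) n ℝ)
    (i : l) (j : n) : tropMul P Q i j = min (P i 0 + Q 0 j) (P i 1 + Q 1 j) := by
  simp [tropMul, Fin.univ_succ]

section Permanent

variable {n : ℕ}

theorem tropPerm_le (A : Matrix (Fin n) (Fin n) ℝ) (ρ : Perm (Fin n)) :
    tropPerm A ≤ ∑ i, A i (ρ i) :=
  Finset.inf'_le _ (Finset.mem_univ ρ)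

theorem sum_submatrix_apply_perm (A : Matrix (Fin n) (Fin n) ℝ) (α β ρ : Perm (Fin n)) :
    ∑ i, A.submatrix α β i (ρ i) = ∑ i, A i ((β * ρ * α⁻¹) i) := by
  conv_rhs => rw [← Equiv.sum_comp α]
  simp [Perm.mul_apply]

theorem tropPerm_submatrix (A : Matrix (Fin n) (Fin n) ℝ) (α β : Perm (Fin n)) :
    tropPerm (A.submatrix α β) = tropPerm A := by
  simp only [tropPerm, Finset.inf'_univ_eq_ciInf, sum_submatrix_apply_perm]
  exact (Equiv.mulLeft β |>.trans (Equiv.mulRight α⁻¹)).iInf_comp (g := fun ρ => ∑ i, A i (ρ i))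

theorem mem_minPerms_submatrix {A : Matrix (Fin n) (Fin n) ℝ} {α β ρ : Perm (Fin n)} :
    ρ ∈ minPerms (A.submatrix α β) ↔ β * ρ * α⁻¹ ∈ minPerms A := by
  simp only [minPerms, Set.mem_ofPred_eq, sum_submatrix_apply_perm, tropPerm_submatrix]

end Permanent

theorem tropFactorsThrough_normalForm (a c d e : ℝ) (ha : 0 ≤ a) (hc : e ≤ c) (hd : e ≤ d) :
    TropFactorsThrough (Fin 2) !![0, 0, a; 0, 0, 0; c, d, e] := by
  set M := |a| + |c| + |d| + |e|
  have hM : -c ≤ M ∧ -d ≤ M ∧ a - e ≤ M ∧ c ≤ M ∧ d ≤ M ∧ e - a ≤ M := by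
    refine ⟨?_, ?_, ?_, ?_, ?_, ?_⟩ <;>
      linarith [neg_abs_le a, le_abs_self c, neg_abs_le c, le_abs_self d, neg_abs_le d,
        le_abs_self e, neg_abs_le e, abs_nonneg a, le_abs_self a]
  -- Rows 0 and 2 of the product are the two rows of `Q`, since `M` is large; row 1 is their
  -- minimum after shifting the second by `-e`, which is `0` as `0 ≤ a` and `e ≤ c, d`.
  refine ⟨!![0, M; 0, -e; M, 0], !![0, 0, a; c, d, e], ?_⟩
  ext i j
  fin_cases i <;> fin_cases j <;> simp [tropMul_fin_two_apply] <;> linarith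

section FinThree

variable {B : Matrix (Fin 3) (Fin 3) ℝ}

theorem add_eq_add_of_one_mem_minPerms_of_swap_mem (h1 : 1 ∈ minPerms B)
    (hs : swap 0 1 ∈ minPerms B) : B 0 1 + B 1 0 = B 0 0 + B 1 1 := by
  simp [minPerms, Fin.sum_univ_three, swap_apply_def] at h1 hs
  linarith

theorem tropFactorsThrough_of_one_swap_mem_minPerms_of_le (h1 : 1 ∈ minPerms B)
    (hs : swap 0 1 ∈ minPerms B) (hab : B 1 2 - B 1 0 + B 0 0 ≤ B 0 2) :
    TropFactorsThrough (Fin 2) B := by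
  have h01 := add_eq_add_of_one_mem_minPerms_of_swap_mem h1 hs
  have hle (ρ : Perm (Fin 3)) : ∑ i, B i i ≤ ∑ i, B i (ρ i) := h1 ▸ tropPerm_le B ρ
  have hcycle := hle (swap 0 1 * swap 1 2)
  have hswap := hle (swap 1 2)
  simp [Fin.sum_univ_three, Perm.mul_apply, swap_apply_def] at hcycle hswap
  have hnormal := (tropFactorsThrough_normalForm (B 0 2 - B 1 2 + B 1 0 - B 0 0)
    (B 2 0 - B 0 0) (B 2 1 - B 0 1) (B 2 2 - B 1 2 + B 1 0 - B 0 0)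
    (by linarith) (by linarith) (by linarith)).add_row_col
    ![0, B 1 0 - B 0 0, 0] ![B 0 0, B 0 1, B 1 2 - B 1 0 + B 0 0]
  obtain ⟨P, Q, hPQ⟩ := hnormal
  refine ⟨P, Q, hPQ.trans ?_⟩
  ext i j
  fin_cases i <;> fin_cases j <;> (simp; try linarith)

theorem tropFactorsThrough_of_one_swap_mem_minPerms (h1 : 1 ∈ minPerms B)
    (hs : swap 0 1 ∈ minPerms B) : TropFactorsThrough (Fin 2) B := by
  rcases le_total (B 1 2 - B 1 0 + B 0 0) (B 0 2) with hab | hab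
  · exact tropFactorsThrough_of_one_swap_mem_minPerms_of_le h1 hs hab
  · -- Conjugating by `(0 1)` keeps both hypotheses and, by `h01`, reverses the inequality.
    set s : Perm (Fin 3) := swap 0 1
    have h01 := add_eq_add_of_one_mem_minPerms_of_swap_mem h1 hs
    have key := tropFactorsThrough_of_one_swap_mem_minPerms_of_le (B := B.submatrix s s)
      (mem_minPerms_submatrix.2 (by simpa [s] using h1))
      (mem_minPerms_submatrix.2 (by simpa [s] using hs)) (by simp [s, swap_apply_def]; linarith)
    have hBs : (B.submatrix s s).submatrix s s = B := by ext; simp [s]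
    exact hBs ▸ key.submatrix s s

end FinThree

theorem Equiv.Perm.fin_three_exists_conj_swap_of_sign_eq_neg_one :
    ∀ π : Perm (Fin 3), sign π = -1 → ∃ α : Perm (Fin 3), α * swap 0 1 * α⁻¹ = π := by
  decide

/-- A sign-singular tropical 3×3 matrix factors tropically as a
3×2 matrix times a 2×3 matrix. -/
theorem stmt6 (A : Matrix (Fin 3) (Fin 3) ℝ) (hA : SignSingular A) :
    ∃ (P : Matrix (Fin 3) (Fin 2) ℝ) (Q : Matrix (Fin 2) (Fin 3) ℝ),
      tropMul P Q = A := by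
  obtain ⟨σ, hσ, τ, hτ, hne⟩ := hA
  obtain ⟨α, hα⟩ := Perm.fin_three_exists_conj_swap_of_sign_eq_neg_one (σ⁻¹ * τ) <| by
    rw [Perm.sign_mul, Perm.sign_inv, Int.units_ne_iff_eq_neg.1 hne, neg_mul, Int.units_mul_self]
  have h1 : 1 ∈ minPerms (A.submatrix α ⇑(σ * α)) := by
    rw [mem_minPerms_submatrix]; simpa using hσ
  have hs : swap 0 1 ∈ minPerms (A.submatrix α ⇑(σ * α)) := by
    rwa [mem_minPerms_submatrix, mul_assoc σ, mul_assoc σ, hα, mul_inv_cancel_left]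
  have hA : (A.submatrix α ⇑(σ * α)).submatrix ⇑α⁻¹ ⇑(σ * α)⁻¹ = A := by ext; simp
  exact hA ▸ (tropFactorsThrough_of_one_swap_mem_minPerms h1 hs).submatrix _ _
end

section
/- Let A = P₁Q₁ and B = P₂Q₂ be (n+1)×(n+1) matrices over the tropical semiring, where P₁, P₂ are (n+1)×n real matrices, Q₁, Q₂ are n×(n+1) real matrices, and all products are tropical. Suppose U and V are words in the free semigroup on two letters {x,y} such that U(A',B') = V(A',B') holds for all n×n tropical matrices A', B'. Then U(AA, AB)·A = V(AA, AB)·A, where all products are tropical matrix products. -/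
/-!
Write `A = P₁Q₁` and `B = P₂Q₂`. Since `AA = P₁(Q₁A)` and `AB = P₁(Q₁B)`, the factor `P₁` can be
slid from the right end of a product of such matrices to its left end:
`W(AA, AB)·A = P₁ · W(Q₁AP₁, Q₁BP₁) · Q₁` for every word `W`, where `Q₁AP₁` and `Q₁BP₁` are
`n × n`. The identity `U = V` in dimension `n` therefore gives the claim.
-/

lemma Finset.inf'_add {ι G : Type*} [AddGroup G] [LinearOrder G] [AddRightMono G]
    (s : Finset ι) (f : ι → G) (a : G) (hs : s.Nonempty) :
    s.inf' hs f + a = s.inf' hs fun i => f i + a :=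
  map_finset_inf' (OrderIso.addRight a) hs f

lemma Finset.add_inf' {ι G : Type*} [AddGroup G] [LinearOrder G] [AddLeftMono G]
    (s : Finset ι) (f : ι → G) (a : G) (hs : s.Nonempty) :
    a + s.inf' hs f = s.inf' hs fun i => a + f i :=
  map_finset_inf' (OrderIso.addLeft a) hs f

lemma tropMul_assoc {l m o p : Type*} [Fintype m] [Nonempty m] [Fintype o] [Nonempty o]
    (A : Matrix l m ℝ) (B : Matrix m o ℝ) (C : Matrix o p ℝ) :
    tropMul (tropMul A B) C = tropMul A (tropMul B C) := by
  funext i j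
  simp only [tropMul, Finset.inf'_add, Finset.add_inf', add_assoc]
  exact Finset.inf'_comm _ _ _

lemma tropMul_shift_step {l m : Type*} [Fintype l] [Nonempty l] [Fintype m] [Nonempty m]
    {M : Matrix l l ℝ} {P : Matrix l m ℝ} {N : Matrix m m ℝ}
    (h : tropMul M P = tropMul P N) (Z : Matrix m l ℝ) :
    tropMul (tropMul M (tropMul P Z)) P = tropMul P (tropMul N (tropMul Z P)) := by
  rw [tropMul_assoc M, tropMul_assoc P Z P, ← tropMul_assoc M P, h, tropMul_assoc]

section Shift

variable {m k : ℕ} [NeZero m] [NeZero k]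
  (P : Matrix (Fin m) (Fin k) ℝ) (X Y : Matrix (Fin k) (Fin m) ℝ)

lemma foldl_tropMul_shift (w : List Bool) {M : Matrix (Fin m) (Fin m) ℝ}
    {N : Matrix (Fin k) (Fin k) ℝ} (h : tropMul M P = tropMul P N) :
    tropMul (w.foldl (fun M c => tropMul M (cond c (tropMul P X) (tropMul P Y))) M) P =
      tropMul P (w.foldl (fun N c => tropMul N (cond c (tropMul X P) (tropMul Y P))) N) := by
  induction w generalizing M N with
  | nil => exact h
  | cons c w ih => exact ih (by cases c <;> exact tropMul_shift_step h _)

lemma evalWord_tropMul_shift (w : List Bool) :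
    tropMul (evalWord (tropMul P X) (tropMul P Y) w) P =
      tropMul P (evalWord (tropMul X P) (tropMul Y P) w) := by
  cases w with
  | nil => exact tropMul_assoc P X P
  | cons c w =>
    refine foldl_tropMul_shift P X Y w ?_
    cases c <;> exact tropMul_assoc _ _ P

lemma evalWord_tropMul_conj (Q : Matrix (Fin k) (Fin m) ℝ) (w : List Bool) :
    tropMul (evalWord (tropMul P X) (tropMul P Y) w) (tropMul P Q) =
      tropMul P (tropMul (evalWord (tropMul X P) (tropMul Y P) w) Q) := by
  rw [← tropMul_assoc, evalWord_tropMul_shift, tropMul_assoc]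

end Shift

theorem stmt7_general {n : ℕ} [NeZero n]
    (P₁ P₂ : Matrix (Fin (n + 1)) (Fin n) ℝ) (Q₁ Q₂ : Matrix (Fin n) (Fin (n + 1)) ℝ)
    (U V : List Bool)
    (hid : ∀ A' B' : Matrix (Fin n) (Fin n) ℝ, evalWord A' B' U = evalWord A' B' V) :
    tropMul (evalWord (tropMul (tropMul P₁ Q₁) (tropMul P₁ Q₁))
        (tropMul (tropMul P₁ Q₁) (tropMul P₂ Q₂)) U) (tropMul P₁ Q₁) =
      tropMul (evalWord (tropMul (tropMul P₁ Q₁) (tropMul P₁ Q₁))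
        (tropMul (tropMul P₁ Q₁) (tropMul P₂ Q₂)) V) (tropMul P₁ Q₁) := by
  rw [tropMul_assoc P₁ Q₁ (tropMul P₁ Q₁), tropMul_assoc P₁ Q₁ (tropMul P₂ Q₂),
    evalWord_tropMul_conj, evalWord_tropMul_conj, hid]

/-- If `A = P₁Q₁`, `B = P₂Q₂` with `P_i` of size `(n+1)×n` and
`Q_i` of size `n×(n+1)`, and the identity `U = V` holds for all `n×n` tropical
matrices, then `U(AA, AB)·A = V(AA, AB)·A`. -/
theorem stmt7 {n : ℕ} [NeZero n]
    (P₁ P₂ : Matrix (Fin (n + 1)) (Fin n) ℝ) (Q₁ Q₂ : Matrix (Fin n) (Fin (n + 1)) ℝ)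
    (U V : List Bool) (hU : U ≠ []) (hV : V ≠ [])
    (hid : ∀ A' B' : Matrix (Fin n) (Fin n) ℝ, evalWord A' B' U = evalWord A' B' V) :
    tropMul (evalWord (tropMul (tropMul P₁ Q₁) (tropMul P₁ Q₁))
        (tropMul (tropMul P₁ Q₁) (tropMul P₂ Q₂)) U) (tropMul P₁ Q₁) =
      tropMul (evalWord (tropMul (tropMul P₁ Q₁) (tropMul P₁ Q₁))
        (tropMul (tropMul P₁ Q₁) (tropMul P₂ Q₂)) V) (tropMul P₁ Q₁) :=
  stmt7_general P₁ P₂ Q₁ Q₂ U V hid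
end

section
/- Let M be an n×n real matrix with M_{ii} = 0 for every i, such that for every permutation σ of {1,…,n} the sum M_{1,σ(1)} + … + M_{n,σ(n)} is nonnegative. Then M is similar to a matrix with all entries nonnegative; that is, there exist real numbers s₁,…,s_n such that M_{ij} + s_i − s_j ≥ 0 for all i, j. -/
namespace Matrix

open List

variable {ι R : Type*} [AddCommMonoid R] (M : Matrix ι ι R)

def walkWeight (l : List ι) : R :=
  (zipWith (fun a b => M a b) l l.tail).sum

@[simp] lemma walkWeight_singleton (a : ι) : walkWeight M [a] = 0 := rfl

@[simp] lemma walkWeight_cons_cons (a b : ι) (l : List ι) :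
    walkWeight M (a :: b :: l) = M a b + walkWeight M (b :: l) :=
  sum_cons

lemma walkWeight_append_cons (l₁ : List ι) (a : ι) (l₂ : List ι) :
    walkWeight M (l₁ ++ a :: l₂) = walkWeight M (l₁ ++ [a]) + walkWeight M (a :: l₂) := by
  induction l₁ using List.twoStepInduction with
  | nil => simp
  | singleton b => simp
  | cons_cons b c l₁ _ ih =>
    simp only [cons_append, walkWeight_cons_cons] at ih ⊢
    rw [ih, add_assoc]

lemma walkWeight_cycle_eq_sum_formPerm [Fintype ι] [DecidableEq ι] (hdiag : ∀ i, M i i = 0)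
    {a : ι} {l : List ι} (hl : (a :: l).Nodup) :
    walkWeight M (a :: l ++ [a]) = ∑ i, M i (formPerm (a :: l) i) := by
  have hsupp : ∑ i, M i (formPerm (a :: l) i) =
      ∑ i ∈ (a :: l).toFinset, M i (formPerm (a :: l) i) :=
    (Finset.sum_subset (Finset.subset_univ _) fun x _ hx => by
      rw [formPerm_apply_of_notMem (by simpa using hx), hdiag]).symm
  rw [hsupp, List.sum_toFinset _ hl, walkWeight]
  congr 1
  refine List.ext_getElem (by simp) fun k h₁ h₂ => ?_
  have htail : (a :: l ++ [a]).tail = (a :: l).rotate 1 := by simp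
  simp only [getElem_zipWith, getElem_map, htail, getElem_rotate, formPerm_apply_getElem _ hl]
  rw [getElem_append_left]

section Ordered

variable [LinearOrder R]

lemma walkWeight_cycle_nonneg [Fintype ι] [DecidableEq ι] (hdiag : ∀ i, M i i = 0)
    (hperm : ∀ σ : Equiv.Perm ι, 0 ≤ ∑ i, M i (σ i)) {a : ι} {l : List ι}
    (hl : (a :: l).Nodup) :
    0 ≤ walkWeight M (a :: l ++ [a]) :=
  walkWeight_cycle_eq_sum_formPerm M hdiag hl ▸ hperm _

lemma exists_nodup_walkWeight_min [Fintype ι] (j : ι) :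
    ∃ l : List ι, (l ++ [j]).Nodup ∧
      ∀ l' : List ι, (l' ++ [j]).Nodup →
        walkWeight M (l ++ [j]) ≤ walkWeight M (l' ++ [j]) := by
  have hfin : {l : List ι | (l ++ [j]).Nodup}.Finite :=
    (List.finite_length_le ι (Fintype.card ι)).subset fun l hl =>
      (Nodup.of_append_left hl).length_le_card
  exact Set.exists_min_image _ _ hfin ⟨[], nodup_singleton j⟩

theorem exists_potential_of_walkWeight_cycle_nonneg [IsOrderedAddMonoid R] [Fintype ι]
    (hcycle : ∀ (a : ι) (l : List ι), (a :: l).Nodup → 0 ≤ walkWeight M (a :: l ++ [a])) :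
    ∃ s : ι → R, ∀ i j, s j ≤ s i + M i j := by
  choose p hp hmin using exists_nodup_walkWeight_min M
  refine ⟨fun j => walkWeight M (p j ++ [j]), fun i j => ?_⟩
  have hext : walkWeight M (p i ++ [i]) + M i j = walkWeight M (p i ++ [i] ++ [j]) := by
    rw [append_assoc, singleton_append, walkWeight_append_cons M (p i) i [j]]
    simp
  rw [hext]
  by_cases hj : j ∈ p i ++ [i]
  · obtain ⟨l₁, l₂, hsplit⟩ := append_of_mem hj
    have hnd := hp i
    rw [hsplit] at hnd ⊢
    rw [append_assoc, cons_append, walkWeight_append_cons]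
    calc walkWeight M (p j ++ [j]) ≤ walkWeight M (l₁ ++ [j]) :=
          hmin j l₁ (hnd.sublist ((singleton_sublist.2 mem_cons_self).append_left l₁))
      _ ≤ walkWeight M (l₁ ++ [j]) + walkWeight M (j :: l₂ ++ [j]) :=
          le_add_of_nonneg_right (hcycle j l₂ (Nodup.of_append_right hnd))
  · exact hmin j _ ((hp i).append (nodup_singleton j) (disjoint_singleton.2 hj))

end Ordered

end Matrix

/-- If `M` has zero diagonal and every permutation sum is nonnegative,
then `M` is similar to an entrywise-nonnegative matrix. -/
theorem stmt8 {n : ℕ} (M : Matrix (Fin n) (Fin n) ℝ)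
    (hdiag : ∀ i, M i i = 0)
    (hperm : ∀ σ : Equiv.Perm (Fin n), 0 ≤ ∑ i, M i (σ i)) :
    ∃ s : Fin n → ℝ, ∀ i j, 0 ≤ M i j + s i - s j := by
  obtain ⟨s, hs⟩ := M.exists_potential_of_walkWeight_cycle_nonneg
    fun _ _ hl => M.walkWeight_cycle_nonneg hdiag hperm hl
  exact ⟨s, fun i j => by linarith [hs i j]⟩
end

section
/- Let C be an n×n real matrix and H a positive real number. Assume that for every subset K ⊆ {1,…,n} and every cyclic permutation σ of K, one has Σ_{κ∈K} C_{κ,σ(κ)} ≥ |K|·max_{κ∈K}{C_{κκ}} + H·Σ_{κ∈K}|C_{κ,κ} − C_{σ(κ),σ(κ)}|. Then C is similar to a diagonally H-dominant matrix. -/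
/-
A matrix similarity `C ↦ C + s i - s j` is a change of potential on the complete digraph with
edge weights `D i j = C i j - max (C i i) (C j j) - H |C i i - C j j|`, and `C` is similar to
a diagonally `H`-dominant matrix exactly when some potential makes all reduced weights
`D i j + s i - s j` nonnegative. The hypothesis says that every simple cycle has nonnegative
`D`-weight, since the `max` over an edge is at most the maximum diagonal entry along the
cycle. With no negative cycles, the minimal weight of a simple path ending at `j` is
such a potential.
-/

namespace List

variable {α M : Type*} [AddCommMonoid M]

def pathWeight (F : α → α → M) (l : List α) : M := (zipWith F l l.tail).sum

/-- The weight of the closed walk through `l` that returns to its head. -/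
def cycleWeight (F : α → α → M) (l : List α) : M := pathWeight F (l ++ l.take 1)

theorem cycleWeight_cons (F : α → α → M) (a : α) (l : List α) :
    cycleWeight F (a :: l) = pathWeight F (a :: l ++ [a]) := rfl

@[simp] theorem pathWeight_singleton (F : α → α → M) (a : α) : pathWeight F [a] = 0 := rfl

@[simp] theorem pathWeight_cons_cons (F : α → α → M) (a b : α) (l : List α) :
    pathWeight F (a :: b :: l) = F a b + pathWeight F (b :: l) := by
  simp only [pathWeight, tail_cons, zipWith_cons_cons, sum_cons]

theorem pathWeight_append_cons (F : α → α → M) (a : α) (q : List α) :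
    ∀ p : List α, pathWeight F (p ++ a :: q) = pathWeight F (p ++ [a]) + pathWeight F (a :: q)
  | [] => by simp
  | [b] => by simp
  | b :: c :: p => by
    simp only [cons_append, pathWeight_cons_cons]
    rw [← cons_append, pathWeight_append_cons F a q (c :: p)]
    simp only [cons_append, add_assoc]

theorem cycleWeight_eq_sum_zipWith_rotate (F : α → α → M) :
    ∀ l : List α, cycleWeight F l = (zipWith F l (l.rotate 1)).sum
  | [] => rfl
  | a :: t => by
    have h : zipWith F (a :: t ++ [a]) (t ++ [a]) = zipWith F (a :: t) (t ++ [a]) := by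
      simpa using zipWith_append (f := F) (l₁ := a :: t) (l₁' := [a]) (l₂' := []) (by simp)
    simpa [cycleWeight_cons, pathWeight, rotate_cons_succ] using congrArg sum h

theorem map_formPerm_eq_rotate [DecidableEq α] {l : List α} (hl : l.Nodup) :
    l.map l.formPerm = l.rotate 1 := by
  refine ext_getElem (by simp) fun i _ _ => ?_
  simp [formPerm_apply_getElem _ hl, getElem_rotate]

theorem sum_formPerm_eq_cycleWeight [DecidableEq α] (F : α → α → M) {l : List α}
    (hl : l.Nodup) : ∑ κ ∈ l.toFinset, F κ (l.formPerm κ) = cycleWeight F l := by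
  rw [sum_toFinset _ hl, cycleWeight_eq_sum_zipWith_rotate, ← map_formPerm_eq_rotate hl,
    zipWith_map_right, zipWith_self]

end List

open List

section Potential

variable {α : Type*} [Fintype α] [DecidableEq α]

noncomputable def minPathWeightTo (D : α → α → ℝ) (j : α) : ℝ :=
  (Finset.univ.filter fun l : {l : List α // l.Nodup} => j ∉ l.1).inf'
    ⟨⟨[], nodup_nil⟩, by simp⟩ fun l => pathWeight D (l.1 ++ [j])

theorem minPathWeightTo_le (D : α → α → ℝ) {j : α} {l : List α} (hl : l.Nodup)
    (hj : j ∉ l) :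
    minPathWeightTo D j ≤ pathWeight D (l ++ [j]) := by
  unfold minPathWeightTo
  exact Finset.inf'_le _ (b := (⟨l, hl⟩ : {l : List α // l.Nodup})) (by simpa using hj)

theorem exists_minPathWeightTo_eq (D : α → α → ℝ) (j : α) :
    ∃ l : List α, l.Nodup ∧ j ∉ l ∧ minPathWeightTo D j = pathWeight D (l ++ [j]) := by
  unfold minPathWeightTo
  obtain ⟨⟨l, hl⟩, hmem, heq⟩ := Finset.exists_mem_eq_inf' _
    fun l : {l : List α // l.Nodup} => pathWeight D (l.1 ++ [j])
  exact ⟨l, hl, by simpa using hmem, heq⟩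

theorem minPathWeightTo_le_add (D : α → α → ℝ)
    (hD : ∀ l : List α, l.Nodup → 0 ≤ cycleWeight D l) (i j : α) :
    minPathWeightTo D j ≤ minPathWeightTo D i + D i j := by
  obtain ⟨l, hl, hil, hsi⟩ := exists_minPathWeightTo_eq D i
  have hli : (l ++ [i]).Nodup := hl.append (nodup_singleton i) (disjoint_singleton.2 hil)
  by_cases hjl : j ∈ l ++ [i]
  · rcases mem_append.1 hjl with hjl | hji
    · -- the path to `i` passes through `j`; closing its tail `j ⋯ i` gives a cycle
      obtain ⟨p, q, rfl⟩ := append_of_mem hjl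
      rw [append_assoc, cons_append] at hli
      have hjp : j ∉ p := fun hj => (nodup_append.1 hli).2.2 j hj j mem_cons_self rfl
      have hcycle : 0 ≤ pathWeight D (j :: q ++ [i]) + D i j := by
        have := hD (j :: q ++ [i]) (hli.sublist (sublist_append_right p _))
        rwa [cons_append, cycleWeight_cons, ← cons_append, append_assoc, singleton_append,
          pathWeight_append_cons, pathWeight_cons_cons, pathWeight_singleton, add_zero] at this
      have hsplit :
          minPathWeightTo D i = pathWeight D (p ++ [j]) + pathWeight D (j :: q ++ [i]) := by
        rw [hsi, append_assoc, cons_append, pathWeight_append_cons]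
      have := minPathWeightTo_le D hli.of_append_left hjp
      linarith
    · obtain rfl := mem_singleton.1 hji
      have hjj : 0 ≤ D j j := by simpa [cycleWeight] using hD [j] (nodup_singleton j)
      linarith
  · calc minPathWeightTo D j ≤ pathWeight D (l ++ [i] ++ [j]) := minPathWeightTo_le D hli hjl
      _ = minPathWeightTo D i + D i j := by
        rw [hsi, append_assoc, singleton_append, pathWeight_append_cons, pathWeight_cons_cons,
          pathWeight_singleton, add_zero]

end Potential

section Matrix

variable {n : ℕ}

def reducedWeight (C : Matrix (Fin n) (Fin n) ℝ) (H : ℝ) (i j : Fin n) : ℝ :=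
  C i j - max (C i i) (C j j) - H * |C i i - C j j|

theorem diagDominant_simTrans_iff (H : ℝ) (s : Fin n → ℝ) (C : Matrix (Fin n) (Fin n) ℝ) :
    DiagDominant H (simTrans s C) ↔ ∀ i j, s j ≤ s i + reducedWeight C H i j := by
  have hdiag : ∀ i, simTrans s C i i = C i i := fun i => by simp [simTrans]
  simp only [DiagDominant, hdiag]
  refine forall₂_congr fun i j => ?_
  simp only [simTrans, reducedWeight]
  constructor <;> intro h <;> linarith

theorem cycleWeight_reducedWeight_nonneg {C : Matrix (Fin n) (Fin n) ℝ} {H : ℝ}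
    (hyp : ∀ (K : Finset (Fin n)) (hK : K.Nonempty) (σ : Equiv.Perm (Fin n)),
      (∀ i ∉ K, σ i = i) → σ.IsCycleOn (K : Set (Fin n)) →
      ∑ κ ∈ K, C κ (σ κ) ≥
        (K.card : ℝ) * K.sup' hK (fun κ => C κ κ) +
          H * ∑ κ ∈ K, |C κ κ - C (σ κ) (σ κ)|)
    {l : List (Fin n)} (hl : l.Nodup) : 0 ≤ cycleWeight (reducedWeight C H) l := by
  rcases eq_or_ne l [] with rfl | hne
  · rfl
  set K := l.toFinset
  have hK : K.Nonempty := List.toFinset_nonempty_iff l |>.2 hne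
  have hσK : ∀ κ ∈ K, l.formPerm κ ∈ K := fun κ hκ => by
    simpa [K] using List.formPerm_apply_mem_of_mem (List.mem_toFinset.1 hκ)
  have hmax : ∑ κ ∈ K, max (C κ κ) (C (l.formPerm κ) (l.formPerm κ)) ≤
      (K.card : ℝ) * K.sup' hK (fun κ => C κ κ) := by
    rw [← nsmul_eq_mul]
    exact Finset.sum_le_card_nsmul _ _ _ fun κ hκ =>
      max_le (Finset.le_sup' (fun κ => C κ κ) hκ)
        (Finset.le_sup' (fun κ => C κ κ) (hσK κ hκ))
  have hcyc := hyp K hK l.formPerm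
    (fun i hi => List.formPerm_apply_of_notMem (by simpa [K] using hi))
    (by simpa [K] using hl.isCycleOn_formPerm)
  rw [← List.sum_formPerm_eq_cycleWeight _ hl]
  simp only [reducedWeight, Finset.sum_sub_distrib, ← Finset.mul_sum]
  linarith

end Matrix

theorem stmt9_general {n : ℕ} (C : Matrix (Fin n) (Fin n) ℝ) (H : ℝ)
    (hyp : ∀ (K : Finset (Fin n)) (hK : K.Nonempty) (σ : Equiv.Perm (Fin n)),
      (∀ i ∉ K, σ i = i) → σ.IsCycleOn (K : Set (Fin n)) →
      ∑ κ ∈ K, C κ (σ κ) ≥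
        (K.card : ℝ) * K.sup' hK (fun κ => C κ κ) +
          H * ∑ κ ∈ K, |C κ κ - C (σ κ) (σ κ)|) :
    ∃ s : Fin n → ℝ, DiagDominant H (simTrans s C) :=
  ⟨minPathWeightTo (reducedWeight C H), (diagDominant_simTrans_iff H _ C).2 <|
    minPathWeightTo_le_add _ fun _ => cycleWeight_reducedWeight_nonneg hyp⟩

/-- If every cyclic permutation of every nonempty subset `K` satisfies
the stated inequality, then `C` is similar to a diagonally `H`-dominant matrix. -/
theorem stmt9 {n : ℕ} (C : Matrix (Fin n) (Fin n) ℝ) (H : ℝ) (hH : 0 < H)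
    (hyp : ∀ (K : Finset (Fin n)) (hK : K.Nonempty) (σ : Equiv.Perm (Fin n)),
      (∀ i ∉ K, σ i = i) → σ.IsCycleOn (K : Set (Fin n)) →
      ∑ κ ∈ K, C κ (σ κ) ≥
        (K.card : ℝ) * K.sup' hK (fun κ => C κ κ) +
          H * ∑ κ ∈ K, |C κ κ - C (σ κ) (σ κ)|) :
    ∃ s : Fin n → ℝ, DiagDominant H (simTrans s C) :=
  stmt9_general C H hyp
end

section
/- Let A be a diagonally H-dominant n×n matrix over the tropical semiring, let i be a fixed index, and let h be a positive integer with h + 1 ≤ H. Then for all indices i₁,…,i_h ∈ {1,…,n}, the sum A_{i,i₁} + A_{i₁,i₂} + … + A_{i_{h−1},i_h} + A_{i_h,i} is at least (h+1)·A_{ii}; that is, the minimum of this expression over all tuples (i₁,…,i_h) is attained when i₁ = … = i_h = i, with value (h+1)·A_{ii}. -/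
/-- For a diagonally `H`-dominant matrix `A` and `h + 1 ≤ H`, the
cyclic sum `A_{i,i₁} + A_{i₁,i₂} + ⋯ + A_{i_h,i}` attains its minimum
`(h+1)·A_{ii}` at the constant tuple `i₁ = ⋯ = i_h = i`. -/
theorem stmt11 {n : ℕ} (H : ℝ) (hH : 0 < H) (A : Matrix (Fin n) (Fin n) ℝ)
    (hA : DiagDominant H A) (i : Fin n) (h : ℕ) (hh : 0 < h)
    (hhH : (h : ℝ) + 1 ≤ H) :
    IsLeast {β : ℝ | ∃ c : ℕ → Fin n, c 0 = i ∧ c (h + 1) = i ∧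
        β = ∑ k ∈ Finset.range (h + 1), A (c k) (c (k + 1))}
      (((h : ℝ) + 1) * A i i) := by
  constructor
  · refine ⟨fun _ => i, rfl, rfl, ?_⟩
    rw [Finset.sum_const, Finset.card_range, nsmul_eq_mul]
    push_cast; ring
  · rintro β ⟨c, h0, h1, rfl⟩
    set d : ℕ → ℝ := fun k => A (c k) (c k) with hd
    set S : ℝ := ∑ k ∈ Finset.range (h + 1), |d k - d (k + 1)| with hS
    have hS0 : 0 ≤ S := Finset.sum_nonneg fun _ _ => abs_nonneg _
    have hterm : ∀ k, d k + H * |d k - d (k + 1)| ≤ A (c k) (c (k + 1)) := by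
      intro k
      have h1' := hA (c k) (c (k + 1))
      have hmax : A (c k) (c k) ≤ max (A (c k) (c k)) (A (c (k+1)) (c (k+1))) :=
        le_max_left _ _
      simp only [hd]
      linarith
    have hchain : ∀ k, |d k - d 0| ≤ ∑ j ∈ Finset.range k, |d j - d (j + 1)| := by
      intro k
      induction k with
      | zero => simp
      | succ k ih =>
        rw [Finset.sum_range_succ]
        calc |d (k+1) - d 0| ≤ |d (k+1) - d k| + |d k - d 0| := abs_sub_le _ _ _
        _ ≤ (∑ j ∈ Finset.range k, |d j - d (j+1)|) + |d k - d (k+1)| := by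
            rw [abs_sub_comm]; linarith
    have hdk : ∀ k ∈ Finset.range (h + 1), d 0 - S ≤ d k := by
      intro k hk
      have hkS : |d k - d 0| ≤ S := by
        refine (hchain k).trans ?_
        apply Finset.sum_le_sum_of_subset_of_nonneg
        · exact Finset.range_subset_range.mpr (le_of_lt (Finset.mem_range.mp hk))
        · intro _ _ _; exact abs_nonneg _
      have := (abs_le.mp hkS).1
      linarith
    have hsum1 : ((h:ℝ)+1) * (d 0 - S) ≤ ∑ k ∈ Finset.range (h + 1), d k := by
      have := Finset.card_nsmul_le_sum (Finset.range (h+1)) d (d 0 - S) hdk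
      rw [Finset.card_range, nsmul_eq_mul] at this
      push_cast at this
      linarith
    have hsum2 : ∑ k ∈ Finset.range (h+1), (d k + H * |d k - d (k+1)|) ≤
        ∑ k ∈ Finset.range (h+1), A (c k) (c (k+1)) :=
      Finset.sum_le_sum fun k _ => hterm k
    rw [Finset.sum_add_distrib, ← Finset.mul_sum, ← hS] at hsum2
    have hd0 : d 0 = A i i := by rw [hd]; simp [h0]
    nlinarith [mul_nonneg (by linarith : (0:ℝ) ≤ H - ((h:ℝ)+1)) hS0]
end

section
/- Let A, B be n×n real matrices forming a diagonally h-dominant pair. Let G be a word in {A,B}* of length g that contains as subwords all words over {A,B} of length n, and assume h = 2ng + 1. Choose X^{(ng+1)} ∈ {A, B} arbitrarily, and let X^{(t)} denote the t-th letter of the word G^n X^{(ng+1)} G^n (a word of length h). Then for any fixed indices κ₀ and κ_h in {1,…,n}, the expression β = X^{(1)}_{κ₀,κ₁} + X^{(2)}_{κ₁,κ₂} + … + X^{(h)}_{κ_{h−1},κ_h} attains its minimum over all tuples (κ₁,…,κ_{h−1}) at some tuple satisfying κ_{ng} = κ_{ng+1}. -/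
/-! By diagonal dominance, a detour of an optimal path that returns to the vertex it left can be
replaced by waiting there: each step of the detour costs at least the diagonal entry it lands on,
plus `h` times the change of diagonal entry, which pays for any drop below the starting one. So
some optimal path moves fewer than `n` times, and then in each half of `GⁿXGⁿ` one of the `n`
copies of `G` sees no move. Every word of length `n` occurs in `G`; hence the path can perform
its moves before the midpoint at consecutive times where the free copy in the first half spells
the cheaper letter for each move, wait at the visited vertex of smallest diagonal entry, and
perform the remaining moves inside the free copy of the second half. Each move then costs the
entry of `A ⊕ B` and each wait the smallest diagonal entry, which the original path cannot beat,
and the new path waits at times `ng` and `ng + 1`. -/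

open Finset

namespace TropicalPath

variable {ι : Type*}

/-- For `s = 0` and `e = h` this is the expression `β`. -/
noncomputable def pathCost (M : ℕ → Matrix ι ι ℝ) (κ : ℕ → ι) (s e : ℕ) : ℝ :=
  ∑ t ∈ Ico s e, M t (κ t) (κ (t + 1))

section Cost

variable {M : ℕ → Matrix ι ι ℝ} {κ κ' : ℕ → ι} {s e h : ℕ}

theorem pathCost_congr (hκ : ∀ t, s ≤ t → t ≤ e → κ t = κ' t) :
    pathCost M κ s e = pathCost M κ' s e :=
  sum_congr rfl fun t ht => by
    rw [mem_Ico] at ht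
    rw [hκ t ht.1 ht.2.le, hκ (t + 1) (by omega) ht.2]

theorem pathCost_add {u : ℕ} (hsu : s ≤ u) (hue : u ≤ e) :
    pathCost M κ s u + pathCost M κ u e = pathCost M κ s e :=
  sum_Ico_consecutive _ hsu hue

def splice (κ κ' : ℕ → ι) (s e : ℕ) : ℕ → ι :=
  fun t => if s ≤ t ∧ t ≤ e then κ' t else κ t

theorem splice_of_mem {t : ℕ} (hs : s ≤ t) (he : t ≤ e) : splice κ κ' s e t = κ' t :=
  if_pos ⟨hs, he⟩

theorem splice_of_le {t : ℕ} (hs : κ' s = κ s) (ht : t ≤ s) : splice κ κ' s e t = κ t := by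
  unfold splice
  split_ifs with h
  · rw [show t = s by omega, hs]
  · rfl

theorem splice_of_ge {t : ℕ} (he : κ' e = κ e) (ht : e ≤ t) : splice κ κ' s e t = κ t := by
  unfold splice
  split_ifs with h
  · rw [show t = e by omega, he]
  · rfl

theorem pathCost_splice_le (hs : κ' s = κ s) (he : κ' e = κ e) (hse : s ≤ e) (heh : e ≤ h)
    (hle : pathCost M κ' s e ≤ pathCost M κ s e) :
    pathCost M (splice κ κ' s e) 0 h ≤ pathCost M κ 0 h := by
  have hsh : s ≤ h := hse.trans heh
  have before : pathCost M (splice κ κ' s e) 0 s = pathCost M κ 0 s :=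
    pathCost_congr fun t _ ht => splice_of_le hs ht
  have inside : pathCost M (splice κ κ' s e) s e = pathCost M κ' s e :=
    pathCost_congr fun t h₁ h₂ => splice_of_mem h₁ h₂
  have after : pathCost M (splice κ κ' s e) e h = pathCost M κ e h :=
    pathCost_congr fun t ht _ => splice_of_ge he ht
  rw [← pathCost_add (Nat.zero_le s) hsh, ← pathCost_add hse heh, before, inside, after,
    ← pathCost_add (κ := κ) (Nat.zero_le s) hsh, ← pathCost_add (κ := κ) hse heh]
  linarith

theorem exists_pathCost_min [Finite ι] (M : ℕ → Matrix ι ι ℝ) (x y : ι) (hh : 0 < h) :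
    ∃ κ : ℕ → ι, κ 0 = x ∧ κ h = y ∧
      ∀ κ' : ℕ → ι, κ' 0 = x → κ' h = y → pathCost M κ 0 h ≤ pathCost M κ' 0 h := by
  let paths : Set (ℕ → ι) := {κ | κ 0 = x ∧ κ h = y}
  have hfin : ((pathCost M · 0 h) '' paths).Finite := by
    refine (Set.finite_range fun f : Fin (h + 1) → ι =>
      pathCost M (fun t => f ⟨min t h, by omega⟩) 0 h).subset ?_
    rintro _ ⟨κ, -, rfl⟩
    exact ⟨fun i => κ i, pathCost_congr fun t _ ht => by simp [Nat.min_eq_left ht]⟩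
  have hne : paths.Nonempty := ⟨fun t => if t = 0 then x else y, by simp, by simp [hh.ne']⟩
  obtain ⟨_, ⟨κ, hκ, rfl⟩, hmin⟩ := Set.exists_min_image _ id hfin (hne.image _)
  exact ⟨κ, hκ.1, hκ.2, fun κ' h₀ hh' => hmin _ ⟨κ', ⟨h₀, hh'⟩, rfl⟩⟩

end Cost

section Jumps

variable [DecidableEq ι] {κ : ℕ → ι} {s u e : ℕ}

def jumps (κ : ℕ → ι) (s e : ℕ) : Finset ℕ :=
  {t ∈ Ico s e | κ t ≠ κ (t + 1)}

theorem jumps_subset_jumps {s' e' : ℕ} (hs : s ≤ s') (he : e' ≤ e) :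
    jumps κ s' e' ⊆ jumps κ s e :=
  filter_subset_filter _ (Ico_subset_Ico hs he)

theorem card_jumps_add (hsu : s ≤ u) (hue : u ≤ e) :
    #(jumps κ s u) + #(jumps κ u e) = #(jumps κ s e) := by
  simp only [jumps, card_filter]
  exact sum_Ico_consecutive _ hsu hue

theorem card_jumps_succ (hse : s ≤ e) :
    #(jumps κ s (e + 1)) = #(jumps κ s e) + if κ e ≠ κ (e + 1) then 1 else 0 := by
  simp only [jumps, card_filter]
  exact sum_Ico_succ_top hse _

theorem card_jumps_mono (hue : u ≤ e) : #(jumps κ s u) ≤ #(jumps κ s e) :=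
  card_le_card (jumps_subset_jumps le_rfl hue)

theorem eq_of_card_jumps_eq_zero (hse : s ≤ e) (h₀ : #(jumps κ s e) = 0) : κ s = κ e := by
  induction e, hse using Nat.le_induction with
  | base => rfl
  | succ e hse ih =>
    rw [card_jumps_succ hse] at h₀
    rw [ih (by omega)]
    by_contra hne
    simp [hne] at h₀

theorem eq_of_card_jumps_eq {t : ℕ} (hsu : s ≤ u) (hst : s ≤ t)
    (h : #(jumps κ s u) = #(jumps κ s t)) : κ u = κ t := by
  wlog hut : u ≤ t generalizing u t
  · exact (this hst hsu h.symm (by omega)).symm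
  exact eq_of_card_jumps_eq_zero hut (by have := card_jumps_add (κ := κ) hsu hut; omega)

theorem card_jumps_eq_of_jumps_eq_empty {v t : ℕ} (hsu : s ≤ u) (hstay : jumps κ u v = ∅)
    (hut : u ≤ t) (htv : t ≤ v) : #(jumps κ s t) = #(jumps κ s u) := by
  have h₀ : #(jumps κ u t) = 0 :=
    card_eq_zero.2 (subset_empty.1 (hstay ▸ jumps_subset_jumps le_rfl htv))
  have := card_jumps_add (κ := κ) hsu hut
  omega

/-- The vertex occupied by `κ` after its `q`-th jump following time `s`. -/
noncomputable def jumpVertex (κ : ℕ → ι) (s q : ℕ) : ι :=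
  κ (Classical.epsilon fun t => s ≤ t ∧ #(jumps κ s t) = q)

theorem jumpVertex_card_jumps (hse : s ≤ e) : jumpVertex κ s #(jumps κ s e) = κ e :=
  have h := Classical.epsilon_spec (p := fun t => s ≤ t ∧ #(jumps κ s t) = #(jumps κ s e))
    ⟨e, hse, rfl⟩
  eq_of_card_jumps_eq h.1 hse h.2

end Jumps

section Counter

variable {N : ℕ → ℕ} {s e : ℕ}

theorem le_and_le_add_of_step (hse : s ≤ e)
    (hN : ∀ t, s ≤ t → t < e → N (t + 1) = N t ∨ N (t + 1) = N t + 1) :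
    N s ≤ N e ∧ N e ≤ N s + (e - s) := by
  induction e, hse using Nat.le_induction with
  | base => simp
  | succ e hse ih =>
    have := ih fun t h₁ h₂ => hN t h₁ (by omega)
    rcases hN e hse (by omega) with h | h <;> omega

/-- The weight of the walk `t ↦ ζ (N t)` on `[s, e]` when the move `ζ q → ζ (q + 1)` costs
`F q` and every stay costs `d`. -/
def countedCost (F : ℕ → ℝ) (d : ℝ) (N : ℕ → ℕ) (s e : ℕ) : ℝ :=
  ∑ t ∈ Ico s e, if N (t + 1) = N t + 1 then F (N t) else d

theorem countedCost_eq (hse : s ≤ e)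
    (hN : ∀ t, s ≤ t → t < e → N (t + 1) = N t ∨ N (t + 1) = N t + 1) (F : ℕ → ℝ) (d : ℝ) :
    countedCost F d N s e = ∑ q ∈ Ico (N s) (N e), F q + (e - s - (N e - N s)) • d := by
  induction e, hse using Nat.le_induction with
  | base => simp [countedCost]
  | succ e hse ih =>
    have hN' : ∀ t, s ≤ t → t < e → N (t + 1) = N t ∨ N (t + 1) = N t + 1 :=
      fun t h₁ h₂ => hN t h₁ (by omega)
    have hb := le_and_le_add_of_step hse hN'
    rw [countedCost, sum_Ico_succ_top hse, ← countedCost, ih hN']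
    rcases hN e hse (by omega) with h | h
    · rw [if_neg (by omega), h, show e + 1 - s - (N e - N s) = e - s - (N e - N s) + 1 by omega,
        succ_nsmul, add_assoc]
    · rw [if_pos h, h, sum_Ico_succ_top hb.1,
        show e + 1 - s - (N e + 1 - N s) = e - s - (N e - N s) by omega, add_right_comm]

end Counter

section Letters

variable {A B : Matrix ι ι ℝ}

def spell (A B : Matrix ι ι ℝ) (W : ℕ → Bool) : ℕ → Matrix ι ι ℝ :=
  fun t => cond (W t) A B

noncomputable def bestLetter (A B : Matrix ι ι ℝ) (i j : ι) : Bool :=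
  decide (A i j ≤ B i j)

theorem min_le_cond (c : Bool) (i j : ι) : min (A i j) (B i j) ≤ cond c A B i j := by
  cases c <;> simp

theorem cond_bestLetter (i j : ι) : cond (bestLetter A B i j) A B i j = min (A i j) (B i j) := by
  by_cases h : A i j ≤ B i j
  · simp [bestLetter, h]
  · simp [bestLetter, h, min_eq_right (le_of_not_ge h)]

theorem cond_diag (hAB : ∀ i, A i i = B i i) (c : Bool) (i : ι) : cond c A B i i = A i i := by
  cases c <;> simp [hAB i]

theorem pathCost_const (hAB : ∀ i, A i i = B i i) (W : ℕ → Bool) (i : ι) (s e : ℕ) :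
    pathCost (spell A B W) (fun _ => i) s e = (e - s) • A i i := by
  simp [pathCost, spell, cond_diag hAB]

end Letters

section Reschedule

variable {A B : Matrix ι ι ℝ}

def moveCost (A B : Matrix ι ι ℝ) (ζ : ℕ → ι) (q : ℕ) : ℝ :=
  min (A (ζ q) (ζ (q + 1))) (B (ζ q) (ζ (q + 1)))

theorem pathCost_comp_eq_countedCost (hAB : ∀ i, A i i = B i i) (W : ℕ → Bool) (ζ : ℕ → ι)
    (σ : ℕ → ℕ) {s e : ℕ} {d : ℝ}
    (hσ : ∀ t, s ≤ t → t < e →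
      (σ (t + 1) = σ t + 1 ∧ W t = bestLetter A B (ζ (σ t)) (ζ (σ t + 1))) ∨
        (σ (t + 1) = σ t ∧ A (ζ (σ t)) (ζ (σ t)) = d)) :
    pathCost (spell A B W) (ζ ∘ σ) s e = countedCost (moveCost A B ζ) d σ s e := by
  refine sum_congr rfl fun t ht => ?_
  rw [mem_Ico] at ht
  rcases hσ t ht.1 ht.2 with ⟨hmove, hW⟩ | ⟨hstay, hd⟩
  · rw [if_pos hmove, Function.comp_apply, Function.comp_apply, hmove, spell, hW,
      cond_bestLetter, moveCost]
  · rw [if_neg (by omega), Function.comp_apply, Function.comp_apply, hstay, spell,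
      cond_diag hAB, hd]

/-- Rises by one per step on `[t₁, t₁ + m₁)` and on `[t₂, t₂ + m₂)`, constant elsewhere. -/
def schedule (t₁ m₁ t₂ m₂ t : ℕ) : ℕ :=
  min m₁ (t - t₁) + min m₂ (t - t₂)

variable [DecidableEq ι]

theorem countedCost_le_pathCost (hAB : ∀ i, A i i = B i i) (W : ℕ → Bool) (κ : ℕ → ι)
    {a s e : ℕ} (has : a ≤ s) {d : ℝ} (hd : ∀ t, s ≤ t → t < e → d ≤ A (κ t) (κ t)) :
    countedCost (moveCost A B (jumpVertex κ a)) d (fun t => #(jumps κ a t)) s e ≤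
      pathCost (spell A B W) κ s e := by
  refine sum_le_sum fun t ht => ?_
  rw [mem_Ico] at ht
  dsimp only
  have hsucc := card_jumps_succ (κ := κ) (has.trans ht.1)
  split_ifs with hmove
  · rw [moveCost, jumpVertex_card_jumps (has.trans ht.1), ← hmove,
      jumpVertex_card_jumps (by omega)]
    exact min_le_cond _ _ _
  · have hstay : κ t = κ (t + 1) := by
      by_contra hne
      simp [hne] at hsucc
      omega
    rw [spell, ← hstay, cond_diag hAB]
    exact hd t ht.1 ht.2

/-- Both sides are counted costs of the same moves (`countedCost_eq`), and the replay pays the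
cheaper letter for every move and the smallest visited diagonal entry for every stay. -/
theorem pathCost_schedule_le (hAB : ∀ i, A i i = B i i) (W : ℕ → Bool) (κ : ℕ → ι)
    {a t₁ m₁ t₂ m₂ : ℕ} (ha : a ≤ t₁) (hle : t₁ + m₁ ≤ t₂)
    (h₁ : #(jumps κ a t₁) = 0) (h₂ : #(jumps κ a (t₂ + m₂)) = m₁ + m₂)
    (hmin : ∀ q ≤ m₁ + m₂,
      A (jumpVertex κ a m₁) (jumpVertex κ a m₁) ≤ A (jumpVertex κ a q) (jumpVertex κ a q))
    (hW₁ : ∀ q < m₁, W (t₁ + q) = bestLetter A B (jumpVertex κ a q) (jumpVertex κ a (q + 1)))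
    (hW₂ : ∀ q < m₂,
      W (t₂ + q) = bestLetter A B (jumpVertex κ a (m₁ + q)) (jumpVertex κ a (m₁ + q + 1))) :
    pathCost (spell A B W) (jumpVertex κ a ∘ schedule t₁ m₁ t₂ m₂) t₁ (t₂ + m₂) ≤
      pathCost (spell A B W) κ t₁ (t₂ + m₂) := by
  set ζ := jumpVertex κ a
  set σ := schedule t₁ m₁ t₂ m₂
  set N := fun t => #(jumps κ a t)
  have hσ : ∀ t, t₁ ≤ t → t < t₂ + m₂ → σ (t + 1) = σ t ∨ σ (t + 1) = σ t + 1 := by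
    intro t _ _
    simp only [σ, schedule]
    omega
  have hN : ∀ t, t₁ ≤ t → t < t₂ + m₂ → N (t + 1) = N t ∨ N (t + 1) = N t + 1 := by
    intro t ht _
    have := card_jumps_succ (κ := κ) (ha.trans ht)
    simp only [N]
    split_ifs at this <;> omega
  have hσ₁ : σ t₁ = 0 := by simp [σ, schedule]; omega
  have hσ₂ : σ (t₂ + m₂) = m₁ + m₂ := by simp only [σ, schedule]; omega
  calc pathCost (spell A B W) (ζ ∘ σ) t₁ (t₂ + m₂)
      = countedCost (moveCost A B ζ) (A (ζ m₁) (ζ m₁)) σ t₁ (t₂ + m₂) :=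
        pathCost_comp_eq_countedCost hAB W ζ σ fun t ht₁ ht₂ => ?_
    _ = countedCost (moveCost A B ζ) (A (ζ m₁) (ζ m₁)) N t₁ (t₂ + m₂) := by
        rw [countedCost_eq (by omega) hσ, countedCost_eq (by omega) hN, hσ₁, hσ₂]
        simp only [N, h₁, h₂]
    _ ≤ pathCost (spell A B W) κ t₁ (t₂ + m₂) :=
        countedCost_le_pathCost hAB W κ ha fun t ht₁ ht₂ => ?_
  · rcases (show t < t₁ + m₁ ∨ t₂ ≤ t ∨ (t₁ + m₁ ≤ t ∧ t < t₂) by omega) with h | h | h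
    · have hσt : σ t = t - t₁ := by simp only [σ, schedule]; omega
      refine Or.inl ⟨by simp only [σ, schedule]; omega, ?_⟩
      rw [hσt, ← hW₁ _ (by omega), Nat.add_sub_cancel' ht₁]
    · have hσt : σ t = m₁ + (t - t₂) := by simp only [σ, schedule]; omega
      refine Or.inl ⟨by simp only [σ, schedule]; omega, ?_⟩
      rw [hσt, ← hW₂ _ (by omega), Nat.add_sub_cancel' h]
    · have hσt : σ t = m₁ := by simp only [σ, schedule]; omega
      exact Or.inr ⟨by simp only [σ, schedule]; omega, by rw [hσt]⟩
  · have hNt : N t ≤ m₁ + m₂ := h₂ ▸ card_jumps_mono ht₂.le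
    rw [← jumpVertex_card_jumps (κ := κ) (ha.trans ht₁)]
    exact hmin _ hNt

end Reschedule

theorem exists_wait_between_stays [DecidableEq ι] {A B : Matrix ι ι ℝ}
    (hAB : ∀ i, A i i = B i i) (W : ℕ → Bool) (κ : ℕ → ι) {a b g k h : ℕ}
    (hab : a + g ≤ b) (hbh : b + g ≤ h)
    (hstay₁ : jumps κ a (a + g) = ∅) (hstay₂ : jumps κ b (b + g) = ∅) (hk : #(jumps κ a b) ≤ k)
    (hW₁ : ∀ f : ℕ → Bool, ∃ off, off + k ≤ g ∧ ∀ q < k, W (a + off + q) = f q)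
    (hW₂ : ∀ f : ℕ → Bool, ∃ off, off + k ≤ g ∧ ∀ q < k, W (b + off + q) = f q) :
    ∃ κ' : ℕ → ι, κ' 0 = κ 0 ∧ κ' h = κ h ∧ (∀ t, a + g ≤ t → t < b → κ' t = κ' (t + 1)) ∧
      pathCost (spell A B W) κ' 0 h ≤ pathCost (spell A B W) κ 0 h := by
  set ζ := jumpVertex κ a
  set m := #(jumps κ a b)
  have hN₁ : ∀ t, a ≤ t → t ≤ a + g → #(jumps κ a t) = 0 := fun t h₁ h₂ =>
    (card_jumps_eq_of_jumps_eq_empty le_rfl hstay₁ h₁ h₂).trans (by simp [jumps])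
  have hN₂ : ∀ t, b ≤ t → t ≤ b + g → #(jumps κ a t) = m :=
    fun t h₁ h₂ => card_jumps_eq_of_jumps_eq_empty (by omega) hstay₂ h₁ h₂
  obtain ⟨m₁, hm₁, hmin⟩ :=
    exists_min_image (range (m + 1)) (fun q => A (ζ q) (ζ q)) ⟨0, by simp⟩
  rw [mem_range] at hm₁
  obtain ⟨off₁, hoff₁, hW₁⟩ := hW₁ fun q => bestLetter A B (ζ q) (ζ (q + 1))
  obtain ⟨off₂, hoff₂, hW₂⟩ := hW₂ fun q => bestLetter A B (ζ (m₁ + q)) (ζ (m₁ + q + 1))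
  set t₁ := a + off₁
  set t₂ := b + off₂
  set E := t₂ + (m - m₁)
  set ρ := ζ ∘ schedule t₁ m₁ t₂ (m - m₁)
  have hcost : pathCost (spell A B W) ρ t₁ E ≤ pathCost (spell A B W) κ t₁ E :=
    pathCost_schedule_le hAB W κ (by omega) (by omega) (hN₁ _ (by omega) (by omega))
      (by rw [hN₂ _ (by omega) (by omega)]; omega) (fun q hq => hmin q (by simp; omega))
      (fun q hq => hW₁ q (by omega)) (fun q hq => hW₂ q (by omega))
  have hρ₁ : ρ t₁ = κ t₁ := by
    rw [← jumpVertex_card_jumps (κ := κ) (by omega : a ≤ t₁), hN₁ _ (by omega) (by omega)]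
    simp only [ρ, Function.comp_apply, schedule]
    congr 1
    omega
  have hρ₂ : ρ E = κ E := by
    rw [← jumpVertex_card_jumps (κ := κ) (by omega : a ≤ E), hN₂ _ (by omega) (by omega)]
    simp only [ρ, Function.comp_apply, schedule]
    congr 1
    omega
  refine ⟨splice κ ρ t₁ E, splice_of_le hρ₁ (Nat.zero_le _), splice_of_ge hρ₂ (by omega),
    fun t h₁ h₂ => ?_, pathCost_splice_le hρ₁ hρ₂ (by omega) (by omega) hcost⟩
  rw [splice_of_mem (by omega) (by omega), splice_of_mem (by omega) (by omega)]
  simp only [ρ, Function.comp_apply, schedule]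
  congr 1
  omega

theorem exists_jumps_eq_empty_block [DecidableEq ι] {κ : ℕ → ι} {h k base g : ℕ}
    (hκ : #(jumps κ 0 h) < k) (hblock : base + k * g ≤ h) :
    ∃ c < k, jumps κ (base + c * g) (base + c * g + g) = ∅ := by
  obtain ⟨c, hc, hcJ⟩ := exists_mem_notMem_of_card_lt_card
    ((card_image_le (f := fun t => (t - base) / g)).trans_lt (hκ.trans_eq (card_range k).symm))
  rw [mem_range] at hc
  have hcg : c * g + g ≤ k * g := by nlinarith
  refine ⟨c, hc, eq_empty_of_forall_notMem fun t ht => hcJ (mem_image.2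
    ⟨t, jumps_subset_jumps (Nat.zero_le _) (by omega) ht, ?_⟩)⟩
  simp only [jumps, mem_filter, mem_Ico] at ht
  exact Nat.div_eq_of_lt_le (by omega) (by rw [add_one_mul]; omega)

theorem getD_flatten_replicate {α : Type*} (G : List α) (d : α) {k c i : ℕ} (hc : c < k)
    (hi : i < G.length) : (List.replicate k G).flatten.getD (c * G.length + i) d = G.getD i d := by
  obtain ⟨k, rfl⟩ : ∃ k', k = k' + 1 := ⟨k - 1, by omega⟩
  induction c generalizing k with
  | zero =>
    rw [List.replicate_succ, List.flatten_cons, zero_mul, zero_add, List.getD_append _ _ _ _ hi]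
  | succ c ih =>
    rw [List.replicate_succ, List.flatten_cons, List.getD_append_right _ _ _ _ (by nlinarith),
      show (c + 1) * G.length + i - G.length = c * G.length + i by rw [add_one_mul]; omega]
    obtain ⟨k', rfl⟩ : ∃ k', k = k' + 1 := ⟨k - 1, by omega⟩
    exact ih _ (by omega)

theorem exists_getD_eq_of_forall_infix {α : Type*} {G : List α} {k : ℕ}
    (hsub : ∀ u : List α, u.length = k → u <:+: G) (d : α) (f : ℕ → α) :
    ∃ off, off + k ≤ G.length ∧ ∀ q < k, G.getD (off + q) d = f q := by
  obtain ⟨s, t, hst⟩ := hsub (List.ofFn fun i : Fin k => f i) (List.length_ofFn)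
  refine ⟨s.length, by simp [← hst], fun q hq => ?_⟩
  rw [← hst, List.append_assoc, List.getD_append_right _ _ _ _ (by omega),
    Nat.add_sub_cancel_left, List.getD_append _ _ _ _ (by simpa),
    List.getD_eq_getElem _ _ (by simpa), List.getElem_ofFn]

theorem exists_wait_middle [DecidableEq ι] {A B : Matrix ι ι ℝ} (hAB : ∀ i, A i i = B i i)
    {G : List Bool} {n : ℕ} (hsub : ∀ u : List Bool, u.length = n → u <:+: G) (b : Bool)
    {κ : ℕ → ι} (hκ : #(jumps κ 0 (2 * n * G.length + 1)) < n) :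
    let W : ℕ → Bool := fun t =>
      ((List.replicate n G).flatten ++ b :: (List.replicate n G).flatten).getD t true
    ∃ κ' : ℕ → ι, κ' 0 = κ 0 ∧ κ' (2 * n * G.length + 1) = κ (2 * n * G.length + 1) ∧
      κ' (n * G.length) = κ' (n * G.length + 1) ∧
      pathCost (spell A B W) κ' 0 (2 * n * G.length + 1) ≤
        pathCost (spell A B W) κ 0 (2 * n * G.length + 1) := by
  intro W
  set g := G.length
  have hX : (List.replicate n G).flatten.length = n * g := by simp [g]
  have h2ng : 2 * n * g = n * g + n * g := by ring
  obtain ⟨c₁, hc₁, hstay₁⟩ := exists_jumps_eq_empty_block (base := 0) (g := g) hκ (by nlinarith)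
  obtain ⟨c₂, hc₂, hstay₂⟩ :=
    exists_jumps_eq_empty_block (base := n * g + 1) (g := g) hκ (by nlinarith)
  have hc₁g : c₁ * g + g ≤ n * g := by nlinarith
  have hc₂g : c₂ * g + g ≤ n * g := by nlinarith
  have hW₁ : ∀ i < g, W (0 + c₁ * g + i) = G.getD i true := fun i hi => by
    rw [zero_add, ← getD_flatten_replicate G true hc₁ hi]
    exact List.getD_append _ _ _ _ (by omega)
  have hW₂ : ∀ i < g, W (n * g + 1 + c₂ * g + i) = G.getD i true := fun i hi => by
    rw [← getD_flatten_replicate G true hc₂ hi]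
    simp only [W]
    rw [List.getD_append_right _ _ _ _ (by omega), hX,
      show n * g + 1 + c₂ * g + i - n * g = c₂ * g + i + 1 by omega, List.getD_cons_succ]
  have hoffers : ∀ base, (∀ i < g, W (base + i) = G.getD i true) →
      ∀ f : ℕ → Bool, ∃ off, off + n ≤ g ∧ ∀ q < n, W (base + off + q) = f q := by
    intro base hbase f
    obtain ⟨off, hoff, hf⟩ := exists_getD_eq_of_forall_infix hsub true f
    exact ⟨off, hoff, fun q hq => by rw [add_assoc, hbase _ (by omega), hf q hq]⟩
  obtain ⟨κ', h₀, hh, hwait, hle⟩ := exists_wait_between_stays hAB W κ (g := g)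
    (h := 2 * n * g + 1) (by omega) (by omega) hstay₁ hstay₂
    ((card_le_card (jumps_subset_jumps (Nat.zero_le _) (by omega))).trans hκ.le)
    (hoffers _ hW₁) (hoffers _ hW₂)
  exact ⟨κ', h₀, hh, hwait _ (by omega) (by omega), hle⟩

theorem exists_lt_eq_of_card_le_card_jumps [Fintype ι] [DecidableEq ι] {κ : ℕ → ι} {h : ℕ}
    (hκ : Fintype.card ι ≤ #(jumps κ 0 h)) :
    ∃ x y, x < y ∧ y - 1 ∈ jumps κ 0 h ∧ κ x = κ y := by
  let landings := insert 0 ((jumps κ 0 h).image (· + 1))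
  have hcard : #(univ : Finset ι) < #landings := by
    rw [card_univ, card_insert_of_notMem (by simp),
      card_image_of_injective _ (add_left_injective 1)]
    omega
  obtain ⟨x, hx, y, hy, hxy, hκxy⟩ :=
    exists_ne_map_eq_of_card_lt_of_maps_to hcard (f := κ) fun _ _ => mem_coe.2 (mem_univ _)
  wlog hlt : x < y generalizing x y
  · exact this y hy x hx hxy.symm hκxy.symm (by omega)
  refine ⟨x, y, hlt, ?_, hκxy⟩
  obtain ⟨t, ht, rfl⟩ := mem_image.1 ((mem_insert.1 hy).resolve_left (by omega))
  simpa using ht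

theorem jumps_splice_const_subset [DecidableEq ι] {κ : ℕ → ι} {x y h : ℕ} (hκ : κ x = κ y) :
    jumps (splice κ (fun _ => κ x) x y) 0 h ⊆ {t ∈ jumps κ 0 h | t < x ∨ y ≤ t} := by
  intro t ht
  simp only [jumps, mem_filter, mem_Ico] at ht ⊢
  have hout : t < x ∨ y ≤ t := by
    by_contra! hin
    exact ht.2 (by rw [splice_of_mem hin.1 hin.2.le, splice_of_mem (by omega) hin.2])
  refine ⟨⟨ht.1, ?_⟩, hout⟩
  rcases hout with hlt | hle
  · rw [splice_of_le (κ' := fun _ => κ x) rfl hlt.le,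
      splice_of_le (κ' := fun _ => κ x) rfl (Nat.succ_le_of_lt hlt)] at ht
    exact ht.2
  · rw [splice_of_ge (κ' := fun _ => κ x) hκ hle,
      splice_of_ge (κ' := fun _ => κ x) hκ (by omega)] at ht
    exact ht.2

/-- A step may lower `e` by `|e t - e (t + 1)|`, but then pays `H ≥ k` times that amount. -/
theorem nsmul_le_sum_add_mul_abs_sub (e : ℕ → ℝ) {H : ℝ} {k : ℕ} (hk : (k : ℝ) ≤ H) (a : ℕ) :
    k • e a ≤ ∑ t ∈ Ico a (a + k), (e (t + 1) + H * |e t - e (t + 1)|) := by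
  induction k generalizing a with
  | zero => simp
  | succ k ih =>
    have hk' : (k : ℝ) ≤ H := by push_cast at hk; linarith
    have ih' := ih hk' (a + 1)
    rw [show a + 1 + k = a + (k + 1) by omega] at ih'
    rw [sum_eq_sum_Ico_succ_bot (by omega)]
    have hΔ := le_abs_self (e a - e (a + 1))
    have hΔ₀ := abs_nonneg (e a - e (a + 1))
    simp only [nsmul_eq_mul] at ih' ⊢
    push_cast at hk ⊢
    nlinarith

end TropicalPath

open TropicalPath

section Dominance

variable {n : ℕ} {A B : Matrix (Fin n) (Fin n) ℝ} {H : ℝ}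

theorem DiagDomPair.le_cond (hp : DiagDomPair H A B) (c : Bool) (i j : Fin n) :
    A j j + H * |A i i - A j j| ≤ cond c A B i j := by
  have hmin : ∀ k, min (A k k) (B k k) = A k k := fun k => by rw [hp.1 k, min_self]
  have h := hp.2 i j
  simp only [hmin] at h
  calc A j j + H * |A i i - A j j| ≤ max (A i i) (A j j) + H * |A i i - A j j| := by
        gcongr; exact le_max_right _ _
    _ ≤ min (A i j) (B i j) := h
    _ ≤ cond c A B i j := min_le_cond c i j

theorem DiagDomPair.nsmul_le_pathCost (hp : DiagDomPair H A B) (W : ℕ → Bool) (κ : ℕ → Fin n)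
    {s e : ℕ} (hse : s ≤ e) (hH : ((e - s : ℕ) : ℝ) ≤ H) :
    (e - s) • A (κ s) (κ s) ≤ pathCost (spell A B W) κ s e := by
  have key := nsmul_le_sum_add_mul_abs_sub (fun t => A (κ t) (κ t)) hH s
  rw [Nat.add_sub_cancel' hse] at key
  exact key.trans (sum_le_sum fun t _ => hp.le_cond _ _ _)

variable {h : ℕ}

theorem DiagDomPair.exists_card_jumps_lt_of_le (hp : DiagDomPair H A B) (hH : (h : ℝ) ≤ H)
    (W : ℕ → Bool) {κ : ℕ → Fin n} (hκ : n ≤ #(jumps κ 0 h)) :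
    ∃ κ' : ℕ → Fin n, κ' 0 = κ 0 ∧ κ' h = κ h ∧
      pathCost (spell A B W) κ' 0 h ≤ pathCost (spell A B W) κ 0 h ∧
      #(jumps κ' 0 h) < #(jumps κ 0 h) := by
  obtain ⟨x, y, hxy, hy, hκxy⟩ :=
    exists_lt_eq_of_card_le_card_jumps (κ := κ) (h := h) (by simpa using hκ)
  have hyh : y ≤ h := by simp only [jumps, mem_filter, mem_Ico] at hy; omega
  refine ⟨splice κ (fun _ => κ x) x y, splice_of_le rfl (Nat.zero_le x), splice_of_ge hκxy hyh,
    pathCost_splice_le rfl hκxy hxy.le hyh ?_, ?_⟩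
  · rw [pathCost_const hp.1]
    refine hp.nsmul_le_pathCost W κ hxy.le (le_trans ?_ hH)
    exact_mod_cast (Nat.sub_le y x).trans hyh
  · refine (card_le_card (jumps_splice_const_subset hκxy)).trans_lt (card_lt_card ?_)
    exact filter_ssubset.2 ⟨y - 1, hy, by omega⟩

theorem DiagDomPair.exists_card_jumps_lt (hp : DiagDomPair H A B) (hH : (h : ℝ) ≤ H)
    (W : ℕ → Bool) (κ : ℕ → Fin n) :
    ∃ κ' : ℕ → Fin n, κ' 0 = κ 0 ∧ κ' h = κ h ∧
      pathCost (spell A B W) κ' 0 h ≤ pathCost (spell A B W) κ 0 h ∧ #(jumps κ' 0 h) < n := by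
  by_cases hκ : #(jumps κ 0 h) < n
  · exact ⟨κ, rfl, rfl, le_rfl, hκ⟩
  obtain ⟨κ₁, h₀, hh, hle, -⟩ := hp.exists_card_jumps_lt_of_le hH W (not_lt.1 hκ)
  obtain ⟨κ₂, h₀', hh', hle', hlt'⟩ := hp.exists_card_jumps_lt hH W κ₁
  exact ⟨κ₂, h₀'.trans h₀, hh'.trans hh, hle'.trans hle, hlt'⟩
termination_by #(jumps κ 0 h)

end Dominance

theorem stmt12_general {n g : ℕ} (A B : Matrix (Fin n) (Fin n) ℝ)
    (h : ℕ) (hhg : h = 2 * n * g + 1)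
    (hpair : DiagDomPair (h : ℝ) A B)
    (G : List Bool) (hG : G.length = g)
    (hsub : ∀ u : List Bool, u.length = n → u <:+: G)
    (b : Bool) (κ₀ κh : Fin n) :
    ∃ κ : ℕ → Fin n, κ 0 = κ₀ ∧ κ h = κh ∧ κ (n * g) = κ (n * g + 1) ∧
      ∀ κ' : ℕ → Fin n, κ' 0 = κ₀ → κ' h = κh →
        ∑ t ∈ Finset.range h,
            (cond (((List.replicate n G).flatten ++ b :: (List.replicate n G).flatten).getD t true)
              A B) (κ t) (κ (t + 1)) ≤
          ∑ t ∈ Finset.range h,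
            (cond (((List.replicate n G).flatten ++ b :: (List.replicate n G).flatten).getD t true)
              A B) (κ' t) (κ' (t + 1)) := by
  subst hG hhg
  set W : ℕ → Bool := fun t =>
    ((List.replicate n G).flatten ++ b :: (List.replicate n G).flatten).getD t true
  obtain ⟨κ, hκ₀, hκh, hmin⟩ := exists_pathCost_min (spell A B W) κ₀ κh (Nat.succ_pos _)
  obtain ⟨κ₁, h₀₁, hh₁, hle₁, hjumps⟩ := hpair.exists_card_jumps_lt le_rfl W κ
  obtain ⟨κ₂, h₀₂, hh₂, hwait, hle₂⟩ := exists_wait_middle hpair.1 hsub b hjumps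
  refine ⟨κ₂, by rw [h₀₂, h₀₁, hκ₀], by rw [hh₂, hh₁, hκh], hwait, fun κ' h₀ hh => ?_⟩
  simpa only [pathCost, spell, range_eq_Ico] using
    (hle₂.trans hle₁).trans (hmin κ' h₀ hh)

/-- Let `A, B` be a diagonally `h`-dominant pair with `h = 2ng + 1`,
and let `G` be a word of length `g` containing all words of length `n` as subwords.
For the word `GⁿXGⁿ` (with `X ∈ {A,B}` the `(ng+1)`-st letter, `true` coding `A`),
the expression `β` attains its minimum at a tuple with `κ_{ng} = κ_{ng+1}`. -/
theorem stmt12 {n g : ℕ} (hn : 0 < n) (A B : Matrix (Fin n) (Fin n) ℝ)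
    (h : ℕ) (hhg : h = 2 * n * g + 1)
    (hpair : DiagDomPair (h : ℝ) A B)
    (G : List Bool) (hG : G.length = g)
    (hsub : ∀ u : List Bool, u.length = n → u <:+: G)
    (b : Bool) (κ₀ κh : Fin n) :
    ∃ κ : ℕ → Fin n, κ 0 = κ₀ ∧ κ h = κh ∧ κ (n * g) = κ (n * g + 1) ∧
      ∀ κ' : ℕ → Fin n, κ' 0 = κ₀ → κ' h = κh →
        ∑ t ∈ Finset.range h,
            (cond (((List.replicate n G).flatten ++ b :: (List.replicate n G).flatten).getD t true)
              A B) (κ t) (κ (t + 1)) ≤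
          ∑ t ∈ Finset.range h,
            (cond (((List.replicate n G).flatten ++ b :: (List.replicate n G).flatten).getD t true)
              A B) (κ' t) (κ' (t + 1)) :=
  stmt12_general A B h hhg hpair G hG hsub b κ₀ κh
end
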